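/- arXiv:1601.05058 — 12 statements merged into one kernel-verified Lean document; each statement's English description precedes it below -/
import Mathlib

section
/- Let q be a power of an odd prime and let f be a planar polynomial over F_{q^2} all of whose coefficients lie in the subfield F_q. Then for any x1, x2 in F_q, f(x1 + x2) lies in F_q; consequently, the set I = {(x, y + zμ) : x, y in F_q, z in F_q^+} is an independent set in the polarity graph G_f, where F_q^+ is a set containing exactly one of {a, -a} for each a in F_q^*, and μ is a root of an irreducible quadratic over F_q. In particular the independence number of G_f is at least (1/2)q^2(q-1). -/
/-- If `f` is a planar polynomial over `F_{q^2}` with all coefficients in the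
subfield `F_q` (described as the fixed points of `x ↦ x^q`), then `f` maps sums of subfield
elements into the subfield; consequently the set
`I = {(x, y + zμ) : x, y ∈ F_q, z ∈ F_q^+}` is an independent set in the (affine) orthogonal
polarity graph `G_f`, and hence the independence number of `G_f` is at least `q^2(q-1)/2`. -/
theorem stmt_0 {p k : ℕ} (hp : p.Prime) (hpodd : Odd p) (hk : 0 < k)
    {F : Type*} [Field F] [Fintype F] (q : ℕ) (hq : q = p ^ k)
    (hF : Fintype.card F = q ^ 2)
    (f : Polynomial F)
    (hplanar : ∀ a : F, a ≠ 0 → Function.Bijective (fun x => f.eval (x + a) - f.eval x))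
    (hcoeff : ∀ i, (f.coeff i) ^ q = f.coeff i)
    (μ : F) (hμ : μ ^ q ≠ μ)
    (P : Set F) (hPmem : ∀ a ∈ P, a ^ q = a ∧ a ≠ 0)
    (hP : ∀ a : F, a ^ q = a → a ≠ 0 → (a ∈ P ↔ -a ∉ P))
    (Gf : SimpleGraph (F × F))
    (hGf : Gf = SimpleGraph.fromRel (fun u v => f.eval (u.1 + v.1) = u.2 + v.2))
    (I : Set (F × F))
    (hI : I = {v | ∃ x y z : F, x ^ q = x ∧ y ^ q = y ∧ z ∈ P ∧ v = (x, y + z * μ)}) :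
    (∀ x1 x2 : F, x1 ^ q = x1 → x2 ^ q = x2 →
        (f.eval (x1 + x2)) ^ q = f.eval (x1 + x2)) ∧
    (I.Pairwise fun u v => ¬ Gf.Adj u v) ∧
    (∃ s : Finset (F × F), ((↑s : Set (F × F)).Pairwise fun u v => ¬ Gf.Adj u v) ∧
        q ^ 2 * (q - 1) / 2 ≤ s.card) := by
  classical
  haveI := Fact.mk hp
  have hqodd : Odd q := hq ▸ hpodd.pow
  have hq1 : 1 < q := by
    rw [hq]; exact Nat.one_lt_pow hk.ne' hp.one_lt
  have hq0 : 0 < q := by omega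
  -- characteristic of F is p
  have hchar : CharP F p := by
    obtain ⟨n, hr, hcard⟩ := FiniteField.card F (ringChar F)
    have hdvd : ringChar F ∣ p := by
      refine hr.dvd_of_dvd_pow (n := 2 * k) ?_
      have : ringChar F ∣ Fintype.card F := by
        rw [hcard]; exact dvd_pow_self _ n.pos.ne'
      rwa [hF, hq, ← pow_mul, mul_comm k 2] at this
    have : ringChar F = p := ((Nat.prime_dvd_prime_iff_eq hr hp).mp hdvd)
    exact this ▸ ringChar.charP F
  -- the map x ↦ x^q is additive
  have hφ : ∀ a : F, iterateFrobenius F p k a = a ^ q := fun a => by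
    rw [iterateFrobenius_def, hq]
  have hadd : ∀ a b : F, (a + b) ^ q = a ^ q + b ^ q := by
    intro a b; rw [← hφ, ← hφ, ← hφ, map_add]
  have hneg : ∀ a : F, (-a) ^ q = -(a ^ q) := fun a => hqodd.neg_pow a
  -- fixed points are closed under evaluation of f
  have hsub : ∀ x : F, x ^ q = x → (f.eval x) ^ q = f.eval x := by
    intro x hx
    rw [← hφ]
    conv_lhs => rw [Polynomial.eval_eq_sum_range]
    rw [map_sum]
    conv_rhs => rw [Polynomial.eval_eq_sum_range]
    refine Finset.sum_congr rfl fun i _ => ?_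
    rw [map_mul, map_pow, hφ, hφ, hx, hcoeff]
  have part1 : ∀ x1 x2 : F, x1 ^ q = x1 → x2 ^ q = x2 →
      (f.eval (x1 + x2)) ^ q = f.eval (x1 + x2) := by
    intro x1 x2 h1 h2
    exact hsub _ (by rw [hadd, h1, h2])
  -- if c is fixed and c * μ is fixed then c = 0
  have hμfree : ∀ c : F, c ^ q = c → (c * μ) ^ q = c * μ → c = 0 := by
    intro c hc hcm
    by_contra hc0
    apply hμ
    rw [mul_pow, hc] at hcm
    exact mul_left_cancel₀ hc0 hcm
  -- uniqueness of representation y + z μ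
  have hrep : ∀ y z y' z' : F, y ^ q = y → z ^ q = z → y' ^ q = y' → z' ^ q = z' →
      y + z * μ = y' + z' * μ → y = y' ∧ z = z' := by
    intro y z y' z' hy hz hy' hz' heq
    have h1 : (z - z') * μ = y' - y := by linear_combination heq
    have h2 : ((z - z') * μ) ^ q = (z - z') * μ := by
      rw [h1, sub_eq_add_neg, hadd, hneg, hy, hy', ← sub_eq_add_neg]
    have hzz : z - z' = 0 := by
      refine hμfree _ ?_ h2
      rw [sub_eq_add_neg, hadd, hneg, hz, hz', ← sub_eq_add_neg]
    have hzz' : z = z' := sub_eq_zero.mp hzz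
    subst hzz'
    exact ⟨add_right_cancel heq, rfl⟩
  -- key: no edges between elements of I
  have hkey : ∀ u ∈ I, ∀ v ∈ I, ¬ f.eval (u.1 + v.1) = u.2 + v.2 := by
    intro u hu v hv heq
    rw [hI] at hu hv
    obtain ⟨x1, y1, z1, hx1, hy1, hz1, rfl⟩ := hu
    obtain ⟨x2, y2, z2, hx2, hy2, hz2, rfl⟩ := hv
    simp only at heq
    have hw : (f.eval (x1 + x2)) ^ q = f.eval (x1 + x2) := part1 _ _ hx1 hx2
    have heq2 : (y1 + y2) + (z1 + z2) * μ = f.eval (x1 + x2) + 0 * μ := by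
      rw [heq]; ring
    obtain ⟨hz1q, hz1ne⟩ := hPmem z1 hz1
    obtain ⟨hz2q, hz2ne⟩ := hPmem z2 hz2
    have := hrep _ _ _ _ (by rw [hadd, hy1, hy2]) (by rw [hadd, hz1q, hz2q]) hw
      (by rw [zero_pow hq0.ne']) heq2
    have hz12 : z2 = -z1 := by linear_combination this.2
    have := (hP z1 hz1q hz1ne).mp hz1
    rw [← hz12] at this
    exact this hz2
  have part2 : I.Pairwise fun u v => ¬ Gf.Adj u v := by
    intro u hu v hv _ hadj
    rw [hGf, SimpleGraph.fromRel_adj] at hadj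
    rcases hadj.2 with h | h
    · exact hkey u hu v hv h
    · exact hkey v hv u hu h
  refine ⟨part1, part2, ?_⟩
  -- Counting
  set K : Finset F := Finset.univ.filter (fun a => a ^ q = a) with hK
  have hmemK : ∀ a : F, a ∈ K ↔ a ^ q = a := by
    intro a; simp [hK]
  -- upper bound on |K|
  have hKle : K.card ≤ q := by
    have hne : (Polynomial.X ^ q - Polynomial.X : Polynomial F) ≠ 0 :=
      FiniteField.X_pow_card_sub_X_ne_zero F hq1
    have hdeg : (Polynomial.X ^ q - Polynomial.X : Polynomial F).natDegree = q :=
      FiniteField.X_pow_card_sub_X_natDegree_eq F hq1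
    have hsubset : K ⊆ (Polynomial.X ^ q - Polynomial.X : Polynomial F).roots.toFinset := by
      intro a ha
      rw [Multiset.mem_toFinset, Polynomial.mem_roots hne]
      simp [Polynomial.IsRoot, sub_eq_zero, (hmemK a).mp ha]
    calc K.card ≤ _ := Finset.card_le_card hsubset
      _ ≤ Multiset.card (Polynomial.X ^ q - Polynomial.X : Polynomial F).roots :=
        Multiset.toFinset_card_le _
      _ ≤ (Polynomial.X ^ q - Polynomial.X : Polynomial F).natDegree := Polynomial.card_roots' _
      _ = q := hdeg
  -- lower bound on |K|
  have hcardU : Fintype.card Fˣ = q ^ 2 - 1 := by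
    rw [Fintype.card_units, hF]
  have hKge : q ≤ K.card := by
    obtain ⟨g, hg⟩ := IsCyclic.exists_generator (α := Fˣ)
    have horder : orderOf g = q ^ 2 - 1 := by
      rw [orderOf_eq_card_of_forall_mem_zpowers hg, Nat.card_eq_fintype_card, hcardU]
    set h : Fˣ := g ^ (q + 1) with hh
    have hfact : q ^ 2 - 1 = (q + 1) * (q - 1) := by
      have := Nat.sq_sub_sq q 1
      simpa using this
    have hdvd : (q + 1) ∣ q ^ 2 - 1 := ⟨q - 1, hfact⟩
    have hordh : orderOf h = q - 1 := by
      rw [hh, orderOf_pow, horder, Nat.gcd_eq_right hdvd, hfact,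
        Nat.mul_div_cancel_left _ (by omega : 0 < q + 1)]
    set S : Finset F := insert 0 ((Finset.range (q - 1)).image (fun i => ((h ^ i : Fˣ) : F)))
      with hS
    have hSsub : S ⊆ K := by
      intro a ha
      rw [hS, Finset.mem_insert] at ha
      rw [hmemK]
      rcases ha with rfl | ha
      · rw [zero_pow hq0.ne']
      · obtain ⟨i, _, rfl⟩ := Finset.mem_image.mp ha
        have hords : h ^ (q - 1) = 1 := by rw [← hordh]; exact pow_orderOf_eq_one h
        have h1 : (h ^ i) ^ (q - 1) = 1 := by
          rw [← pow_mul, mul_comm, pow_mul, hords, one_pow]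
        have h1' : (((h ^ i : Fˣ) : F)) ^ (q - 1) = 1 := by
          rw [← Units.val_pow_eq_pow_val, h1, Units.val_one]
        calc ((h ^ i : Fˣ) : F) ^ q = ((h ^ i : Fˣ) : F) ^ (q - 1) * ((h ^ i : Fˣ) : F) := by
              rw [← pow_succ]; congr 1; omega
          _ = ((h ^ i : Fˣ) : F) := by rw [h1', one_mul]
    have hScard : S.card = q := by
      rw [hS, Finset.card_insert_of_notMem, Finset.card_image_of_injOn]
      · rw [Finset.card_range]; omega
      · intro i hi j hj hij
        have : (h ^ i : Fˣ) = h ^ j := Units.ext hij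
        refine pow_injOn_Iio_orderOf ?_ ?_ this
        · simp only [Set.mem_Iio, hordh]; exact Finset.mem_range.mp hi
        · simp only [Set.mem_Iio, hordh]; exact Finset.mem_range.mp hj
      · intro h0
        obtain ⟨i, _, hi⟩ := Finset.mem_image.mp h0
        exact (h ^ i).ne_zero hi
    calc q = S.card := hScard.symm
      _ ≤ K.card := Finset.card_le_card hSsub
  have hKcard : K.card = q := le_antisymm hKle hKge
  -- |P| as a finset
  set Pf : Finset F := Finset.univ.filter (fun a => a ∈ P) with hPf
  have hmemPf : ∀ a : F, a ∈ Pf ↔ a ∈ P := by intro a; simp [hPf]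
  have hK0 : (K.erase 0).card = q - 1 := by
    rw [Finset.card_erase_of_mem ((hmemK 0).mpr (zero_pow hq0.ne')), hKcard]
  have hsplit : K.erase 0 = Pf ∪ Pf.image (fun a => -a) := by
    ext a
    simp only [Finset.mem_erase, Finset.mem_union, Finset.mem_image, hmemK, hmemPf]
    constructor
    · rintro ⟨ha0, haq⟩
      by_cases hmem : a ∈ P
      · exact Or.inl hmem
      · refine Or.inr ⟨-a, ?_, neg_neg a⟩
        exact not_not.mp ((not_iff_not.mpr (hP a haq ha0)).mp hmem)
    · rintro (hmem | ⟨b, hb, rfl⟩)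
      · obtain ⟨h1, h2⟩ := hPmem a hmem
        exact ⟨h2, h1⟩
      · obtain ⟨h1, h2⟩ := hPmem b hb
        exact ⟨neg_ne_zero.mpr h2, by rw [hneg, h1]⟩
  have hdisj : Disjoint Pf (Pf.image (fun a => -a)) := by
    rw [Finset.disjoint_left]
    intro a ha hb
    obtain ⟨b, hb', rfl⟩ := Finset.mem_image.mp hb
    rw [hmemPf] at ha hb'
    obtain ⟨h1, h2⟩ := hPmem b hb'
    exact ((hP (-b) (by rw [hneg, h1]) (neg_ne_zero.mpr h2)).mp ha) (by rwa [neg_neg])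
  have hPfcard : Pf.card = (q - 1) / 2 := by
    have := hK0
    rw [hsplit, Finset.card_union_of_disjoint hdisj,
      Finset.card_image_of_injective _ neg_injective] at this
    omega
  -- the independent finset
  set s : Finset (F × F) :=
    (K ×ˢ (K ×ˢ Pf)).image (fun t => (t.1, t.2.1 + t.2.2 * μ)) with hs
  have hsI : (↑s : Set (F × F)) ⊆ I := by
    intro v hv
    obtain ⟨⟨x, y, z⟩, hmem, rfl⟩ := Finset.mem_image.mp hv
    rw [Finset.mem_product] at hmem
    obtain ⟨hx, hmem2⟩ := hmem
    rw [Finset.mem_product] at hmem2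
    obtain ⟨hy, hz⟩ := hmem2
    rw [hI]
    exact ⟨x, y, z, (hmemK x).mp hx, (hmemK y).mp hy, (hmemPf z).mp hz, rfl⟩
  refine ⟨s, part2.mono hsI, ?_⟩
  have hscard : s.card = q * (q * ((q - 1) / 2)) := by
    rw [hs, Finset.card_image_of_injOn, Finset.card_product, Finset.card_product,
      hKcard, hPfcard]
    rintro ⟨x, y, z⟩ hmem ⟨x', y', z'⟩ hmem' heq
    simp only [Finset.mem_coe, Finset.mem_product] at hmem hmem'
    obtain ⟨hx, hy, hz⟩ := hmem
    obtain ⟨hx', hy', hz'⟩ := hmem'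
    simp only [Prod.mk.injEq] at heq
    obtain ⟨hxx, hyy⟩ := heq
    obtain ⟨hz1, _⟩ := hPmem z ((hmemPf z).mp hz)
    obtain ⟨hz1', _⟩ := hPmem z' ((hmemPf z').mp hz')
    have := hrep y z y' z' ((hmemK y).mp hy) hz1 ((hmemK y').mp hy') hz1' hyy
    simp [hxx, this.1, this.2]
  rw [hscard]
  have h2 : 2 ∣ q - 1 := (Nat.Odd.sub_odd hqodd odd_one).two_dvd
  calc q ^ 2 * (q - 1) / 2 = q ^ 2 * ((q - 1) / 2) := Nat.mul_div_assoc _ h2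
    _ = q * (q * ((q - 1) / 2)) := by ring
    _ ≤ _ := le_refl _
end

section
/- Let p be an odd prime, q = p^{2n}, σ: F_q → F_q the map x ↦ x^{p^n}, and θ a generator of F_q^*. In the Dickson division ring D with elements {x + λy : x, y ∈ F_q} and multiplication (x+λy)·(z+λt) = xz + θ·t·y^σ + λ(yz + x^σ t), the set I = {(x1 + λx2, y1 + λy2) : x1, y1 ∈ F_{p^n}, x2 a nonzero square in F_q, y2 ∈ F_q} is an independent set of size (1/2)q^2(q-1) in the polarity graph G(Π_D, ω). -/
/-! Adjacency of `u` and `v` forces `z₁x₁ + θx₂z₂ = -y₁ - t₁` in the first coordinate, so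
`θ · (x₂z₂) = -(y₁ + t₁ + z₁x₁)` lies in the subfield `F_{p^n}`. Since `|F| = (p^n)^2`, every
nonzero element of `F_{p^n}` is a square in `F`, and `x₂z₂` is a nonzero square, so the generator
`θ` would be a square, which it is not in odd characteristic. The count is the product of the
sizes of `F_{p^n}` (twice), of the nonzero squares, and of `F`. -/

namespace FiniteField

open Finset Polynomial

variable {F : Type*} [Field F] [Fintype F]

theorem not_isSquare_of_forall_mem_zpowers (hF : ringChar F ≠ 2) {θ : Fˣ}
    (hθ : ∀ x, x ∈ Subgroup.zpowers θ) : ¬IsSquare (θ : F) := by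
  rintro ⟨r, hr⟩
  have hr0 : r ≠ 0 := by rintro rfl; simp at hr
  have hθsq : IsSquare θ := ⟨Units.mk0 r hr0, Units.ext (by simpa using hr)⟩
  obtain ⟨a, ha⟩ := exists_nonsquare hF
  have ha0 : a ≠ 0 := by rintro rfl; exact ha IsSquare.zero
  obtain ⟨k, hk⟩ := hθ (Units.mk0 a ha0)
  have hsq : IsSquare (Units.mk0 a ha0) := by rw [← hk]; exact hθsq.zpow k
  exact ha (by simpa using hsq.map (Units.coeHom F))

theorem card_nthRootsFinset_one_of_dvd {d : ℕ} (hd : d ∣ Fintype.card F - 1) :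
    #(nthRootsFinset d (1 : F)) = d := by
  classical
  have hq : Fintype.card F - 1 ≠ 0 := by have := Fintype.one_lt_card (α := F); omega
  have hd0 : d ≠ 0 := by rintro rfl; exact hq (zero_dvd_iff.mp hd)
  obtain ⟨g, hg⟩ := IsCyclic.exists_generator (α := Fˣ)
  have hg' : IsPrimitiveRoot (g : F) (Fintype.card F - 1) := by
    rw [IsPrimitiveRoot.coe_units_iff, ← Fintype.card_units, ← Nat.card_eq_fintype_card,
      ← orderOf_eq_card_of_forall_mem_zpowers hg]
    exact IsPrimitiveRoot.orderOf g
  have hζ := hg'.pow_of_dvd (Nat.div_pos (Nat.le_of_dvd (by omega) hd) (by omega)).ne'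
    (Nat.div_dvd_of_dvd hd)
  rw [Nat.div_div_self hd hq] at hζ
  exact hζ.card_nthRootsFinset

theorem card_filter_pow_eq_self [DecidableEq F] {m : ℕ} (hm : m - 1 ∣ Fintype.card F - 1) :
    #{x : F | x ^ m = x} = m := by
  have hm1 : 1 < m := by
    by_contra! h
    rw [Nat.sub_eq_zero_of_le h, zero_dvd_iff] at hm
    have := Fintype.one_lt_card (α := F)
    omega
  obtain ⟨d, rfl⟩ : ∃ d, m = d + 1 := ⟨m - 1, by omega⟩
  have hd : 0 < d := by omega
  rw [Nat.add_sub_cancel] at hm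
  have hfix : ({x : F | x ^ (d + 1) = x} : Finset F) = insert 0 (nthRootsFinset d (1 : F)) := by
    ext x
    rw [mem_filter_univ, mem_insert, mem_nthRootsFinset hd]
    rcases eq_or_ne x 0 with rfl | hx
    · simp
    · rw [pow_succ, mul_eq_right₀ hx]
      simp [hx]
  rw [hfix, card_insert_of_notMem (by simp [mem_nthRootsFinset hd, zero_pow hd.ne']),
    card_nthRootsFinset_one_of_dvd hm]

theorem card_filter_exists_ne_zero_sq [DecidableEq F] (hF : ringChar F ≠ 2) :
    #{x : F | ∃ u, u ≠ 0 ∧ u ^ 2 = x} = Fintype.card F / 2 := by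
  have hcard := Fintype.one_lt_card (α := F)
  have hodd : Fintype.card F % 2 = 1 := by
    have := (even_card_iff_char_two (F := F)).not.mp hF
    omega
  have hsq : ({x : F | ∃ u, u ≠ 0 ∧ u ^ 2 = x} : Finset F)
      = nthRootsFinset (Fintype.card F / 2) (1 : F) := by
    ext x
    rw [mem_filter_univ, mem_nthRootsFinset (by omega)]
    rcases eq_or_ne x 0 with rfl | hx
    · simp [zero_pow (by omega : Fintype.card F / 2 ≠ 0)]
    · rw [← isSquare_iff hF hx]
      constructor
      · rintro ⟨u, -, rfl⟩
        exact ⟨u, sq u⟩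
      · rintro ⟨r, rfl⟩
        exact ⟨r, by rintro rfl; simp at hx, sq r⟩
  rw [hsq, card_nthRootsFinset_one_of_dvd ⟨2, by omega⟩]

theorem isSquare_of_pow_eq_self {m : ℕ} (hm : Odd m) (hcard : Fintype.card F = m ^ 2) {e : F}
    (he : e ^ m = e) : IsSquare e := by
  rcases eq_or_ne e 0 with rfl | he0
  · exact IsSquare.zero
  obtain ⟨k, rfl⟩ := hm
  have hF : ringChar F ≠ 2 := by
    rw [Ne, even_card_iff_char_two, hcard, Nat.pow_mod]
    simp
  have he1 : e ^ (2 * k) = 1 := by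
    rwa [pow_succ, mul_eq_right₀ he0] at he
  -- `(m^2 - 1)/2 = (m - 1) * (m + 1)/2`, and `m + 1` is even
  have hhalf : Fintype.card F / 2 = 2 * k * (k + 1) := by
    rw [hcard, show (2 * k + 1) ^ 2 = 2 * (2 * k * (k + 1)) + 1 by ring]
    omega
  rw [isSquare_iff hF he0, hhalf, pow_mul, he1, one_pow]

theorem mul_pow_ne_self_of_not_isSquare {m : ℕ} (hm : Odd m) (hcard : Fintype.card F = m ^ 2)
    {θ s : F} (hθ : ¬IsSquare θ) (hs : IsSquare s) (hs0 : s ≠ 0) : (θ * s) ^ m ≠ θ * s := by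
  intro h
  apply hθ
  simpa [hs0] using (isSquare_of_pow_eq_self hm hcard h).div hs

end FiniteField

theorem Nat.mul_sq_div_two_mul_eq_of_odd {m : ℕ} (hm : Odd m) :
    m * (m ^ 2 / 2) * (m * m ^ 2) = (m ^ 2) ^ 2 * (m ^ 2 - 1) / 2 := by
  obtain ⟨k, rfl⟩ := hm
  have hsq : (2 * k + 1) ^ 2 = 2 * (2 * k * (k + 1)) + 1 := by ring
  rw [hsq, Nat.add_sub_cancel, mul_left_comm _ 2, Nat.mul_div_cancel_left _ two_pos,
    show (2 * (2 * k * (k + 1)) + 1) / 2 = 2 * k * (k + 1) by omega, ← hsq]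
  ring

section

open Finset FiniteField

variable {F : Type*} [Field F] [Fintype F]

theorem mul_add_mul_ne_of_not_isSquare {p n : ℕ} [Fact p.Prime] [CharP F p] (hp : Odd p)
    (hcard : Fintype.card F = (p ^ n) ^ 2) {θ s x y z t : F} (hθ : ¬IsSquare θ)
    (hs : IsSquare s) (hs0 : s ≠ 0) (hx : x ^ p ^ n = x) (hy : y ^ p ^ n = y)
    (hz : z ^ p ^ n = z) (ht : t ^ p ^ n = t) : z * x + θ * s ≠ -y - t := by
  intro h
  apply mul_pow_ne_self_of_not_isSquare hp.pow hcard hθ hs hs0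
  rw [show θ * s = -y - t - z * x by linear_combination h, ← iterateFrobenius_def (p := p),
    map_sub, map_sub, map_neg, map_mul]
  simp only [iterateFrobenius_def, hx, hy, hz, ht]

theorem ncard_setOf_pow_eq_self_and_exists_sq [DecidableEq F] (hF : ringChar F ≠ 2) {m : ℕ}
    (hm : m - 1 ∣ Fintype.card F - 1) :
    {w : (F × F) × (F × F) | w.1.1 ^ m = w.1.1 ∧ w.2.1 ^ m = w.2.1 ∧
      ∃ u : F, u ≠ 0 ∧ u ^ 2 = w.1.2}.ncard
      = m * (Fintype.card F / 2) * (m * Fintype.card F) := by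
  set A : Finset F := {x | x ^ m = x}
  set B : Finset F := {x | ∃ u, u ≠ 0 ∧ u ^ 2 = x}
  have hprod : {w : (F × F) × (F × F) | w.1.1 ^ m = w.1.1 ∧ w.2.1 ^ m = w.2.1 ∧
      ∃ u : F, u ≠ 0 ∧ u ^ 2 = w.1.2} = ↑((A ×ˢ B) ×ˢ (A ×ˢ (univ : Finset F))) := by
    ext
    simp only [Set.mem_ofPred_eq, coe_product, Set.mem_prod, coe_filter, mem_univ, true_and,
      coe_univ, Set.mem_univ, and_true, A, B]
    tauto
  rw [hprod, Set.ncard_coe_finset, card_product, card_product, card_product,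
    card_filter_pow_eq_self hm, card_filter_exists_ne_zero_sq hF, card_univ]

end

/-- Elements `x + λy` of the Dickson ring are modelled as pairs `(x, y)`, and affine points
`(a, b)` of `Π_D` as pairs of such pairs. -/
theorem stmt_2_general {p n : ℕ} (hp : p.Prime) (hpodd : Odd p)
    {F : Type*} [Field F] [Fintype F] (q : ℕ) (hq : q = p ^ (2 * n))
    (hF : Fintype.card F = q)
    (θ : Fˣ) (hθ : ∀ x : Fˣ, x ∈ Subgroup.zpowers θ)
    (σ : F → F) (hσ : ∀ x, σ x = x ^ p ^ n)
    (mul : F × F → F × F → F × F)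
    (hmul : ∀ x y z t : F, mul (x, y) (z, t) = (x * z + (θ : F) * t * σ y, y * z + σ x * t))
    (G : SimpleGraph ((F × F) × (F × F)))
    (hG : G = SimpleGraph.fromRel (fun u v =>
      mul (v.1.1, σ v.1.2) u.1 = (-u.2.1 - v.2.1, -u.2.2 - σ v.2.2)))
    (I : Set ((F × F) × (F × F)))
    (hI : I = {w | w.1.1 ^ p ^ n = w.1.1 ∧ w.2.1 ^ p ^ n = w.2.1 ∧
      ∃ u : F, u ≠ 0 ∧ u ^ 2 = w.1.2}) :
    (I.Pairwise fun u v => ¬ G.Adj u v) ∧ I.ncard = q ^ 2 * (q - 1) / 2 := by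
  classical
  subst hF
  have : Fact p.Prime := ⟨hp⟩
  have : CharP F p := charP_of_card_eq_prime_pow hq
  have hcard : Fintype.card F = (p ^ n) ^ 2 := by rw [hq, ← pow_mul, mul_comm]
  have hchar : ringChar F ≠ 2 := by
    rw [ringChar.eq F p]; rintro rfl; exact absurd hpodd (by decide)
  have hσσ : ∀ x, σ (σ x) = x := fun x => by
    rw [hσ, hσ, ← pow_mul, ← sq, ← hcard, FiniteField.pow_card]
  have hnotRel : ∀ u ∈ I, ∀ v ∈ I,
      mul (v.1.1, σ v.1.2) u.1 ≠ (-u.2.1 - v.2.1, -u.2.2 - σ v.2.2) := by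
    subst hI
    rintro ⟨⟨x₁, -⟩, y₁, y₂⟩ ⟨hx₁, hy₁, a, ha, rfl⟩ ⟨⟨z₁, -⟩, t₁, t₂⟩ ⟨hz₁, ht₁, b, hb, rfl⟩ h
    dsimp only at hx₁ hy₁ hz₁ ht₁ h
    rw [hmul, hσσ] at h
    refine mul_add_mul_ne_of_not_isSquare (s := a ^ 2 * b ^ 2) hpodd hcard
      (FiniteField.not_isSquare_of_forall_mem_zpowers hchar hθ) ⟨a * b, by ring⟩
      (by simp [ha, hb]) hx₁ hy₁ hz₁ ht₁ ?_
    linear_combination congrArg Prod.fst h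
  refine ⟨fun u hu v hv _ hadj => ?_, ?_⟩
  · rw [hG, SimpleGraph.fromRel_adj] at hadj
    exact hadj.2.elim (hnotRel u hu v hv) (hnotRel v hv u hu)
  · have hdvd : p ^ n - 1 ∣ Fintype.card F - 1 := by
      simpa [hcard] using Nat.sub_dvd_pow_sub_pow (p ^ n) 1 2
    rw [hI, ncard_setOf_pow_eq_self_and_exists_sq hchar hdvd, hcard]
    exact Nat.mul_sq_div_two_mul_eq_of_odd hpodd.pow

/-- In the polarity graph of the plane coordinatized by the Dickson division
ring `D` (elements `x + λy` modelled as pairs `(x, y)` over `F_q`, `q = p^{2n}`), the set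
`I = {(x1 + λx2, y1 + λy2) : x1, y1 ∈ F_{p^n}, x2 a nonzero square, y2 ∈ F_q}` is an
independent set of size `q^2(q-1)/2`. Adjacency of affine points `u = (x1+λx2, y1+λy2)` and
`v = (z1+λz2, t1+λt2)` is `(z1 + λ z2^σ)·(x1 + λx2) = -y1-t1 + λ(-y2 - t2^σ)`. -/
theorem stmt_2 {p n : ℕ} (hp : p.Prime) (hpodd : Odd p) (hn : 0 < n)
    {F : Type*} [Field F] [Fintype F] (q : ℕ) (hq : q = p ^ (2 * n))
    (hF : Fintype.card F = q)
    (θ : Fˣ) (hθ : ∀ x : Fˣ, x ∈ Subgroup.zpowers θ)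
    (σ : F → F) (hσ : ∀ x, σ x = x ^ p ^ n)
    (mul : F × F → F × F → F × F)
    (hmul : ∀ x y z t : F, mul (x, y) (z, t) = (x * z + (θ : F) * t * σ y, y * z + σ x * t))
    (G : SimpleGraph ((F × F) × (F × F)))
    (hG : G = SimpleGraph.fromRel (fun u v =>
      mul (v.1.1, σ v.1.2) u.1 = (-u.2.1 - v.2.1, -u.2.2 - σ v.2.2)))
    (I : Set ((F × F) × (F × F)))
    (hI : I = {w | w.1.1 ^ p ^ n = w.1.1 ∧ w.2.1 ^ p ^ n = w.2.1 ∧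
      ∃ u : F, u ≠ 0 ∧ u ^ 2 = w.1.2}) :
    (I.Pairwise fun u v => ¬ G.Adj u v) ∧ I.ncard = q ^ 2 * (q - 1) / 2 :=
  stmt_2_general hp hpodd q hq hF θ hθ σ hσ mul hmul G hG I hI
end

section
/- Let q be an even power of an odd prime, √q its square root, and μ ∈ F_q \ F_{√q} with μ^{√q} + μ = 0. For c ∈ F_{√q} define X_c = {(1, a, b + cμ) : a, b ∈ F_{√q}} as vertices of the graph U_q^* on nonzero projective triples over F_q, where (x0,x1,x2) ~ (y0,y1,y2) iff x0 y2^{√q} + x2 y0^{√q} = x1 y1^{√q}. If c1 ≠ c2 in F_{√q}, then there is no edge of U_q^* between X_{c1} and X_{c2}. -/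
lemma key_aux {p n : ℕ} (hp : p.Prime) (hpodd : Odd p) {F : Type*} [Field F]
    [CharP F p] (d k μ : F) (hd : d ≠ 0) (hds : d ^ p ^ n = d) (hks : k ^ p ^ n = k)
    (hμs : μ ^ p ^ n = -μ) (hμ1 : μ ^ p ^ n ≠ μ) (heq : d * μ = k) : False := by
  have h2 : (d * μ) ^ p ^ n = k ^ p ^ n := by rw [heq]
  rw [mul_pow, hds, hks, hμs] at h2
  -- h2 : d * -μ = k ; heq : d * μ = k
  have h3 : d * (2 * μ) = 0 := by
    have := sub_eq_zero_of_eq (heq.trans h2.symm)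
    ring_nf at this ⊢
    linear_combination this
  have h2ne : (2 : F) ≠ 0 := by
    apply Ring.two_ne_zero
    rw [ringChar.eq F p]
    rintro rfl
    simp [Nat.odd_iff] at hpodd
  have hμ0 : μ = 0 := by
    rcases mul_eq_zero.mp h3 with h | h
    · exact absurd h hd
    · rcases mul_eq_zero.mp h with h | h
      · exact absurd h h2ne
      · exact h
  apply hμ1
  rw [hμ0, zero_pow (pow_ne_zero _ hp.pos.ne')]


/-- In the unitary polarity graph `U_q^*` (vertices: nonzero triples over
`F_q`, `q = s^2` with `s = p^n`, adjacency `x0 y2^s + x2 y0^s = x1 y1^s`), if `c1 ≠ c2` in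
the subfield `F_s` then there is no edge between `X_{c1}` and `X_{c2}`, where
`X_c = {(1, a, b + cμ) : a, b ∈ F_s}` and `μ ∉ F_s` with `μ^s + μ = 0`. -/
theorem stmt_5 {p n : ℕ} (hp : p.Prime) (hpodd : Odd p) (hn : 0 < n)
    {F : Type*} [Field F] [Fintype F] (s q : ℕ) (hs : s = p ^ n) (hq : q = s ^ 2)
    (hF : Fintype.card F = q)
    (μ : F) (hμ1 : μ ^ s ≠ μ) (hμ2 : μ ^ s + μ = 0)
    (U : SimpleGraph (F × F × F))
    (hU : U = SimpleGraph.fromRel (fun x y =>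
      x.1 * y.2.2 ^ s + x.2.2 * y.1 ^ s = x.2.1 * y.2.1 ^ s))
    (c1 c2 a1 b1 a2 b2 : F)
    (hc1 : c1 ^ s = c1) (hc2 : c2 ^ s = c2) (hcc : c1 ≠ c2)
    (ha1 : a1 ^ s = a1) (hb1 : b1 ^ s = b1) (ha2 : a2 ^ s = a2) (hb2 : b2 ^ s = b2) :
    ¬ U.Adj (1, a1, b1 + c1 * μ) (1, a2, b2 + c2 * μ) := by
  subst hs hq hU
  -- characteristic p
  have hcharp : CharP F p := by
    have hq0 : ((p ^ n) ^ 2 : ℕ) = (0 : F) := by rw [← hF]; exact Nat.cast_card_eq_zero F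
    have hp0 : (p : F) = 0 := by
      have : ((p : F)) ^ (n * 2) = 0 := by push_cast [← pow_mul] at hq0; exact hq0
      exact pow_eq_zero_iff (by positivity) |>.mp this
    have := CharP.ringChar_of_prime_eq_zero hp hp0
    rw [← this]; exact ringChar.charP F
  haveI : Fact p.Prime := ⟨hp⟩
  have hμs : μ ^ p ^ n = -μ := eq_neg_of_add_eq_zero_left hμ2
  rintro ⟨hne, h | h⟩ <;>
    simp only [one_mul, one_pow, mul_one, add_pow_char_pow, mul_pow] at h
  · rw [hc2, hμs, ha2] at h
    -- h : b2 ^ p ^ n + c2 * -μ + (b1 + c1 * μ) = a1 * a2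
    refine key_aux (n := n) hp hpodd (c1 - c2) (a1 * a2 - b1 - b2) μ (sub_ne_zero.mpr hcc)
      ?_ ?_ hμs hμ1 ?_
    · rw [sub_pow_char_pow, hc1, hc2]
    · rw [sub_pow_char_pow, sub_pow_char_pow, mul_pow, ha1, ha2, hb1, hb2]
    · rw [hb2] at h; ring_nf at h ⊢; linear_combination h
  · rw [hc1, hμs, ha1] at h
    refine key_aux (n := n) hp hpodd (c2 - c1) (a1 * a2 - b1 - b2) μ
      (sub_ne_zero.mpr (Ne.symm hcc)) ?_ ?_ hμs hμ1 ?_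
    · rw [sub_pow_char_pow, hc1, hc2]
    · rw [sub_pow_char_pow, sub_pow_char_pow, mul_pow, ha1, ha2, hb1, hb2]
    · rw [hb1] at h; ring_nf at h ⊢; linear_combination h
end

section
/- Let q be an even power of an odd prime and μ ∈ F_q with μ^{√q} = -μ, μ ∉ F_{√q}. In the graph U_q^*, vertices (1, a1, b1 + cμ) and (1, a2, b2 + cμ) with a1, a2, b1, b2, c ∈ F_{√q} are adjacent if and only if b2 - a1 a2 + b1 = 0. Consequently, the induced subgraph U_q^*[X_c] is isomorphic to the subgraph of the graph ER_{√q}^* induced by {(1, x1, x2) : x1, x2 ∈ F_{√q}}. -/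
/-- In `U_q^*`, two distinct vertices `(1, a1, b1 + cμ)` and `(1, a2, b2 + cμ)`
with all parameters in the subfield `F_s` (`s = √q`) are adjacent iff `b2 - a1 a2 + b1 = 0`.
Consequently the induced subgraph `U_q^*[X_c]` is isomorphic to the subgraph of the graph `ER_s^*`
induced by `{(1, x1, x2) : x1, x2 ∈ F_s}`. -/
theorem stmt_6 {p n : ℕ} (hp : p.Prime) (hpodd : Odd p) (hn : 0 < n)
    {F : Type*} [Field F] [Fintype F] (s q : ℕ) (hs : s = p ^ n) (hq : q = s ^ 2)
    (hF : Fintype.card F = q)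
    (μ : F) (hμ1 : μ ^ s ≠ μ) (hμ2 : μ ^ s = -μ)
    (U : SimpleGraph (F × F × F))
    (hU : U = SimpleGraph.fromRel (fun x y =>
      x.1 * y.2.2 ^ s + x.2.2 * y.1 ^ s = x.2.1 * y.2.1 ^ s))
    (E : SimpleGraph (F × F × F))
    (hE : E = SimpleGraph.fromRel (fun x y =>
      x.1 * y.2.2 - x.2.1 * y.2.1 + x.2.2 * y.1 = 0))
    (c : F) (hc : c ^ s = c)
    (Xc : Set (F × F × F))
    (hXc : Xc = {v | ∃ a b : F, a ^ s = a ∧ b ^ s = b ∧ v = (1, a, b + c * μ)})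
    (Y : Set (F × F × F))
    (hY : Y = {v | ∃ x1 x2 : F, x1 ^ s = x1 ∧ x2 ^ s = x2 ∧ v = (1, x1, x2)}) :
    (∀ a1 b1 a2 b2 : F, a1 ^ s = a1 → b1 ^ s = b1 → a2 ^ s = a2 → b2 ^ s = b2 →
      (a1, b1) ≠ (a2, b2) →
      (U.Adj (1, a1, b1 + c * μ) (1, a2, b2 + c * μ) ↔ b2 - a1 * a2 + b1 = 0)) ∧
    Nonempty (SimpleGraph.induce Xc U ≃g SimpleGraph.induce Y E) := by
  haveI : Fact p.Prime := ⟨hp⟩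
  -- characteristic of F is p
  obtain ⟨r, hr⟩ := CharP.exists F
  haveI := hr
  obtain ⟨m, hrprime, hcard⟩ := FiniteField.card F r
  have hrp : r = p := by
    have hdvd : r ∣ p ^ (2 * n) := by
      have h1 : r ∣ Fintype.card F := hcard ▸ dvd_pow_self r m.pos.ne'
      rwa [hF, hq, hs, ← pow_mul, mul_comm] at h1
    exact (Nat.prime_dvd_prime_iff_eq hrprime hp).mp
      (hrprime.dvd_of_dvd_pow hdvd)
  subst hrp
  have key : ∀ x y : F, (x + y) ^ s = x ^ s + y ^ s := by
    intro x y
    rw [hs]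
    exact add_pow_char_pow x y r n
  -- fixed-point conditions
  have one_pow : (1 : F) ^ s = 1 := one_pow s
  have hμc : (c * μ) ^ s = -(c * μ) := by rw [mul_pow, hc, hμ2, mul_neg]
  have hbc : ∀ b : F, b ^ s = b → (b + c * μ) ^ s = b - c * μ := by
    intro b hb
    rw [key, hb, hμc, sub_eq_add_neg]
  -- main adjacency computation
  have main : ∀ a1 b1 a2 b2 : F, a1 ^ s = a1 → b1 ^ s = b1 → a2 ^ s = a2 → b2 ^ s = b2 →
      (a1, b1) ≠ (a2, b2) →
      (U.Adj (1, a1, b1 + c * μ) (1, a2, b2 + c * μ) ↔ b2 - a1 * a2 + b1 = 0) := by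
    intro a1 b1 a2 b2 ha1 hb1 ha2 hb2 hne
    subst hU
    have hvne : ((1 : F), a1, b1 + c * μ) ≠ (1, a2, b2 + c * μ) := by
      intro h
      apply hne
      have h1 : a1 = a2 := congrArg (fun v => v.2.1) h
      have h2 : b1 + c * μ = b2 + c * μ := congrArg (fun v => v.2.2) h
      exact Prod.ext h1 (add_right_cancel h2)
    simp only [SimpleGraph.fromRel_adj]
    constructor
    · rintro ⟨-, h | h⟩
      · rw [hbc b2 hb2, one_pow, one_mul, mul_one, ha2] at h
        linear_combination h
      · rw [hbc b1 hb1, one_pow, one_mul, mul_one, ha1] at h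
        linear_combination h
    · intro h
      refine ⟨hvne, Or.inl ?_⟩
      show (1:F) * (b2 + c * μ) ^ s + (b1 + c * μ) * 1 ^ s = a1 * a2 ^ s
      rw [hbc b2 hb2, one_pow, one_mul, mul_one, ha2]
      linear_combination h
  refine ⟨main, ?_⟩
  -- the graph isomorphism
  have memXc : ∀ v : F × F × F, v ∈ Xc ↔
      v.1 = 1 ∧ v.2.1 ^ s = v.2.1 ∧ (v.2.2 - c * μ) ^ s = v.2.2 - c * μ := by
    intro v
    rw [hXc]
    constructor
    · rintro ⟨a, b, ha, hb, rfl⟩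
      exact ⟨rfl, ha, by simpa using hb⟩
    · rintro ⟨h1, h2, h3⟩
      exact ⟨v.2.1, v.2.2 - c * μ, h2, h3, by
        rw [sub_add_cancel]
        exact Prod.ext h1 (Prod.ext rfl rfl)⟩
  have memY : ∀ v : F × F × F, v ∈ Y ↔
      v.1 = 1 ∧ v.2.1 ^ s = v.2.1 ∧ v.2.2 ^ s = v.2.2 := by
    intro v
    rw [hY]
    constructor
    · rintro ⟨a, b, ha, hb, rfl⟩
      exact ⟨rfl, ha, hb⟩
    · rintro ⟨h1, h2, h3⟩
      exact ⟨v.2.1, v.2.2, h2, h3, Prod.ext h1 (Prod.ext rfl rfl)⟩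
  -- forward and backward maps
  refine ⟨⟨⟨fun v => ⟨(1, v.1.2.1, v.1.2.2 - c * μ), ?_⟩,
      fun v => ⟨(1, v.1.2.1, v.1.2.2 + c * μ), ?_⟩, ?_, ?_⟩, ?_⟩⟩
  · obtain ⟨h1, h2, h3⟩ := (memXc v.1).mp v.2
    exact (memY _).mpr ⟨rfl, h2, h3⟩
  · obtain ⟨h1, h2, h3⟩ := (memY v.1).mp v.2
    refine (memXc _).mpr ⟨rfl, h2, by simpa using h3⟩
  · intro v
    obtain ⟨h1, h2, h3⟩ := (memXc v.1).mp v.2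
    ext <;> simp [h1.symm]
  · intro v
    obtain ⟨h1, h2, h3⟩ := (memY v.1).mp v.2
    ext <;> simp [h1.symm]
  · intro v w
    obtain ⟨⟨v1, v2, v3⟩, hv⟩ := v
    obtain ⟨⟨w1, w2, w3⟩, hw⟩ := w
    rw [hXc] at hv hw
    obtain ⟨va, vb, hva, hvb, hveq⟩ := hv
    obtain ⟨wa, wb, hwa, hwb, hweq⟩ := hw
    obtain ⟨rfl, rfl, rfl⟩ : v1 = 1 ∧ v2 = va ∧ v3 = vb + c * μ := by
      simpa [Prod.ext_iff] using hveq
    obtain ⟨rfl, rfl, rfl⟩ : w1 = 1 ∧ w2 = wa ∧ w3 = wb + c * μ := by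
      simpa [Prod.ext_iff] using hweq
    show E.Adj (1, v2, vb + c * μ - c * μ) (1, w2, wb + c * μ - c * μ) ↔
      U.Adj (1, v2, vb + c * μ) (1, w2, wb + c * μ)
    have hsub : vb + c * μ - c * μ = vb := by ring
    have hsub' : wb + c * μ - c * μ = wb := by ring
    rw [hsub, hsub']
    by_cases hvw : (v2, vb) = (w2, wb)
    · obtain ⟨rfl, rfl⟩ : v2 = w2 ∧ vb = wb := by simpa [Prod.ext_iff] using hvw
      constructor
      · intro h
        exact absurd rfl h.ne
      · intro h
        exact absurd rfl h.ne
    · rw [main v2 vb w2 wb hva hvb hwa hwb hvw, hE]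
      simp only [SimpleGraph.fromRel_adj]
      constructor
      · rintro ⟨-, h | h⟩
        · have h' : (1 : F) * wb - v2 * w2 + vb * 1 = 0 := h
          linear_combination h'
        · have h' : (1 : F) * vb - w2 * v2 + wb * 1 = 0 := h
          linear_combination h'
      · intro h
        have hne : ((1 : F), v2, vb) ≠ (1, w2, wb) := by
          simpa [Prod.ext_iff] using hvw
        refine ⟨hne, Or.inl ?_⟩
        show (1 : F) * wb - v2 * w2 + vb * 1 = 0
        linear_combination h
end

section
/- Let p be an odd prime, s, n positive integers with 2n/s an odd integer ≥ 3, q = p^n, d = p^s, and θ a generator of F_{q^2}^*. Then there exists μ ∈ F_{q^2} \ F_q such that μ^d = u2 · μ where u2 = (θ^{q+1})^{d-1} ∈ F_q^* is a (d-1)-th power in F_{q^2}^*. Explicitly μ = θ^{q+1+t} with t = (q^2-1)/(d-1) works. -/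
/-- If `2 ≤ a` and `a^s - 1 ∣ a^n - 1` then `s ∣ n`. -/
lemma aux_dvd_of_pow_sub_one_dvd {a s n : ℕ} (ha : 2 ≤ a) (hs : 0 < s)
    (h : a ^ s - 1 ∣ a ^ n - 1) : s ∣ n := by
  have hmod : n % s < s := Nat.mod_lt _ hs
  have h1 : a ^ s - 1 ∣ a ^ (s * (n / s)) - 1 := by
    simpa only [one_pow, pow_mul] using Nat.sub_dvd_pow_sub_pow (a ^ s) 1 (n / s)
  have hX : 1 ≤ a ^ (n % s) := Nat.one_le_pow _ _ (by omega)
  have hA : 1 ≤ a ^ (s * (n / s)) := Nat.one_le_pow _ _ (by omega)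
  have hn1 : 1 ≤ a ^ n := Nat.one_le_pow _ _ (by omega)
  have hn : a ^ n = a ^ (s * (n / s)) * a ^ (n % s) := by
    rw [← pow_add, Nat.div_add_mod]
  have h2 : a ^ s - 1 ∣ a ^ (n % s) * (a ^ (s * (n / s)) - 1) := h1.mul_left _
  have hsplit : a ^ n - 1 = a ^ (n % s) * (a ^ (s * (n / s)) - 1) + (a ^ (n % s) - 1) := by
    have hnz : (a : ℤ) ^ n = (a : ℤ) ^ (s * (n / s)) * (a : ℤ) ^ (n % s) := by
      rw [← pow_add, Nat.div_add_mod]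
    zify [hX, hA, hn1]
    rw [hnz]; ring
  have h3 : a ^ s - 1 ∣ a ^ (n % s) - 1 := by
    have := Nat.dvd_sub h h2
    rwa [hsplit, Nat.add_sub_cancel_left] at this
  have h4 : a ^ (n % s) - 1 = 0 := by
    by_contra hne
    have hle := Nat.le_of_dvd (by omega) h3
    have hlt : a ^ (n % s) < a ^ s := Nat.pow_lt_pow_right ha hmod
    omega
  have h6 : n % s = 0 := by
    by_contra hne
    have : a ^ 1 ≤ a ^ (n % s) := Nat.pow_le_pow_right (by omega) (by omega)
    simp at this; omega
  exact Nat.dvd_of_mod_eq_zero h6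

/-- With `q = p^n`, `d = p^s`, `2n/s = r` odd `≥ 3`, `θ` a generator of
`F_{q^2}^*`, and `t = (q^2-1)/(d-1)`, the element `μ = θ^{q+1+t}` lies outside `F_q`
(i.e. `μ^q ≠ μ`) and satisfies `μ^d = u2·μ` where `u2 = (θ^{q+1})^{d-1}` is a nonzero
element of the subfield `F_q` and is a `(d-1)`-th power in `F_{q^2}^*`. -/
theorem stmt_10 {p s n r : ℕ} (hp : p.Prime) (hpodd : Odd p) (hs : 0 < s) (hn : 0 < n)
    (hr : s * r = 2 * n) (hrodd : Odd r) (hr3 : 3 ≤ r)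
    {F : Type*} [Field F] [Fintype F] (q d : ℕ) (hq : q = p ^ n) (hd : d = p ^ s)
    (hF : Fintype.card F = q ^ 2)
    (θ : Fˣ) (hθ : ∀ x : Fˣ, x ∈ Subgroup.zpowers θ)
    (t : ℕ) (ht : t = (q ^ 2 - 1) / (d - 1))
    (μ u2 : F) (hμ : μ = (θ : F) ^ (q + 1 + t)) (hu2 : u2 = ((θ : F) ^ (q + 1)) ^ (d - 1)) :
    μ ^ q ≠ μ ∧ μ ^ d = u2 * μ ∧
    u2 ≠ 0 ∧ u2 ^ q = u2 ∧ ∃ w : F, w ≠ 0 ∧ w ^ (d - 1) = u2 := by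
  classical
  have hp2 : 2 ≤ p := hp.two_le
  have hp3 : 3 ≤ p := by rcases hpodd with ⟨k, hk⟩; omega
  have hq3 : 3 ≤ q := by
    calc 3 ≤ p := hp3
    _ = p ^ 1 := (pow_one p).symm
    _ ≤ p ^ n := Nat.pow_le_pow_right (by omega) hn
    _ = q := hq.symm
  have hd3 : 3 ≤ d := by
    calc 3 ≤ p := hp3
    _ = p ^ 1 := (pow_one p).symm
    _ ≤ p ^ s := Nat.pow_le_pow_right (by omega) hs
    _ = d := hd.symm
  have hq2d : q ^ 2 = d ^ r := by
    rw [hq, hd, ← pow_mul, ← pow_mul, mul_comm n 2, ← hr]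
  have hdvd : d - 1 ∣ q ^ 2 - 1 := by
    rw [hq2d]
    simpa only [one_pow] using Nat.sub_dvd_pow_sub_pow d 1 r
  set N := q ^ 2 - 1 with hN
  have htd : t * (d - 1) = N := by
    rw [ht]; exact Nat.div_mul_cancel hdvd
  have hcard : Fintype.card Fˣ = N := by
    rw [Fintype.card_units, hF]
  have hord : orderOf θ = N := by
    rw [orderOf_eq_card_of_forall_mem_zpowers hθ, Nat.card_eq_fintype_card, hcard]
  have hpow : ∀ a b : ℕ, ((θ : F) ^ a = (θ : F) ^ b ↔ a ≡ b [MOD N]) := by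
    intro a b
    rw [← Units.val_pow_eq_pow_val, ← Units.val_pow_eq_pow_val, ← hord]
    exact ⟨fun h => pow_eq_pow_iff_modEq.mp (Units.ext h),
      fun h => congrArg Units.val (pow_eq_pow_iff_modEq.mpr h)⟩
  obtain ⟨e, he⟩ : ∃ e, d = e + 1 := ⟨d - 1, by omega⟩
  obtain ⟨f, hf⟩ : ∃ f, q = f + 1 := ⟨q - 1, by omega⟩
  have hNe : N = (q + 1) * f := by
    have h2 : (q + 1) * f + 1 = q ^ 2 := by rw [hf]; ring
    rw [hN, ← h2, Nat.add_sub_cancel]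
  refine ⟨?_, ?_, ?_, ?_, ?_⟩
  · -- μ ^ q ≠ μ
    intro hcon
    rw [hμ, ← pow_mul] at hcon
    have hmod : (q + 1 + t) * q ≡ q + 1 + t [MOD N] := (hpow _ _).mp hcon
    have hdvd2 : N ∣ (q + 1 + t) * q - (q + 1 + t) :=
      (Nat.modEq_iff_dvd' (Nat.le_mul_of_pos_right _ (by omega))).mp hmod.symm
    have heq : (q + 1 + t) * q - (q + 1 + t) = (q + 1 + t) * f := by
      have : (q + 1 + t) * q = (q + 1 + t) * f + (q + 1 + t) := by rw [hf]; ring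
      rw [this, Nat.add_sub_cancel]
    rw [heq, hNe] at hdvd2
    have hfpos : 0 < f := by omega
    obtain ⟨c, hc⟩ := hdvd2
    have hc2 : q + 1 + t = (q + 1) * c :=
      Nat.eq_of_mul_eq_mul_right hfpos (hc.trans (by ring))
    have hcpos : 1 ≤ c := by
      rcases Nat.eq_zero_or_pos c with h0 | h1
      · rw [h0, mul_zero] at hc2; omega
      · exact h1
    have hdvd4 : q + 1 ∣ t := by
      refine ⟨c - 1, ?_⟩
      have := Nat.mul_sub (q + 1) c 1
      rw [mul_one] at this
      omega
    obtain ⟨k, hk⟩ := hdvd4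
    have hke : k * (d - 1) = f := by
      have h1 : (q + 1) * (k * (d - 1)) = (q + 1) * f := by
        rw [← hNe, ← htd, hk]; ring
      exact Nat.eq_of_mul_eq_mul_left (by omega) h1
    have hdq : d - 1 ∣ q - 1 := by
      refine ⟨k, ?_⟩
      rw [hf, Nat.add_sub_cancel, ← hke, mul_comm]
    rw [hd, hq] at hdq
    obtain ⟨m, hm⟩ := aux_dvd_of_pow_sub_one_dvd hp2 hs hdq
    have : r = 2 * m := by
      have h1 : s * r = s * (2 * m) := by rw [hr, hm]; ring
      exact Nat.eq_of_mul_eq_mul_left hs h1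
    rcases hrodd with ⟨j, hj⟩; omega
  · -- μ ^ d = u2 * μ
    rw [hμ, hu2, ← pow_mul, ← pow_mul, ← pow_add]
    apply (hpow _ _).mpr
    have heq : (q + 1 + t) * d = ((q + 1) * (d - 1) + (q + 1 + t)) + t * (d - 1) := by
      rw [he, Nat.add_sub_cancel]; ring
    rw [heq, htd]
    exact Nat.add_mod_right _ N
  · rw [hu2, ← Units.val_pow_eq_pow_val, ← Units.val_pow_eq_pow_val]
    exact Units.ne_zero _
  · -- u2 ^ q = u2
    rw [hu2, ← pow_mul, ← pow_mul, ← pow_mul]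
    apply (hpow _ _).mpr
    have heq : (q + 1) * ((d - 1) * q) = (q + 1) * (d - 1) + (d - 1) * N := by
      rw [hNe, hf, he, Nat.add_sub_cancel]; ring
    rw [heq]
    exact Nat.add_mul_mod_self_right _ _ _
  · refine ⟨(θ : F) ^ (q + 1), ?_, by rw [hu2]⟩
    rw [← Units.val_pow_eq_pow_val]
    exact Units.ne_zero _
end

section
/- Let p be an odd prime, s, n positive integers with 2n/s an odd integer, q = p^n, d = p^s. If u2, δ ∈ F_{q^2}^* and u2 is a (d-1)-th power in F_{q^2}^*, then for every ξ ∈ F_{q^2} the equation X^d + u2 δ^{d-1} X = ξ has a unique solution X ∈ F_{q^2}. -/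
/-- With `q = p^n`, `d = p^s`, `2n/s` odd, if `u2, δ ∈ F_{q^2}^*` and `u2` is
a `(d-1)`-th power, then for every `ξ ∈ F_{q^2}` the equation `X^d + u2 δ^{d-1} X = ξ` has a
unique solution in `F_{q^2}`. -/
theorem stmt_11 {p s n r : ℕ} (hp : p.Prime) (hpodd : Odd p) (hs : 0 < s) (hn : 0 < n)
    (hr : s * r = 2 * n) (hrodd : Odd r)
    {F : Type*} [Field F] [Fintype F] (q d : ℕ) (hq : q = p ^ n) (hd : d = p ^ s)
    (hF : Fintype.card F = q ^ 2)
    (u2 δ : F) (hu2 : u2 ≠ 0) (hδ : δ ≠ 0)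
    (hpow : ∃ w : F, w ≠ 0 ∧ w ^ (d - 1) = u2)
    (ξ : F) :
    ∃! x : F, x ^ d + u2 * δ ^ (d - 1) * x = ξ := by
  obtain ⟨w, hw, hwu⟩ := hpow
  have hp2 : p ≠ 2 := by
    rintro rfl
    have := Nat.odd_iff.mp hpodd
    omega
  have hcard : Fintype.card F = p ^ (2 * n) := by
    rw [hF, hq, ← pow_mul, mul_comm]
  -- characteristic of F is p
  haveI hchar : CharP F p := by
    obtain ⟨p', hp'⟩ := CharP.exists F
    haveI := hp'
    have hp'prime : p'.Prime := CharP.char_is_prime F p'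
    obtain ⟨k, _, hcard'⟩ := FiniteField.card F p'
    have hdvd : p ∣ p' ^ (k : ℕ) := by
      rw [← hcard', hcard]
      exact dvd_pow_self p (by omega)
    have : p = p' :=
      (Nat.prime_dvd_prime_iff_eq hp hp'prime).mp (hp.dvd_of_dvd_pow hdvd)
    rwa [this]
  haveI : ExpChar F p := ExpChar.prime hp
  have hd2 : 2 ≤ d := by
    rw [hd]
    calc 2 ≤ p := hp.two_le
    _ = p ^ 1 := (pow_one p).symm
    _ ≤ p ^ s := Nat.pow_le_pow_right hp.pos hs
  have hdodd : Odd d := hd ▸ hpodd.pow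
  -- key arithmetic
  have hfact : ∀ k : ℕ, (d - 1) * (∑ i ∈ Finset.range k, d ^ i) = d ^ k - 1 := by
    intro k
    induction k with
    | zero => simp
    | succ j ih =>
      rw [Finset.sum_range_succ, Nat.mul_add, ih]
      have h1 : 1 ≤ d ^ j := Nat.one_le_pow _ _ (by omega)
      have h2 : d ^ j ≤ d ^ (j + 1) := Nat.pow_le_pow_right (by omega) (by omega)
      have h3 : (d - 1) * d ^ j = d ^ (j + 1) - d ^ j := by
        rw [Nat.sub_mul, one_mul, pow_succ']
      omega
  set m : ℕ := ∑ i ∈ Finset.range r, d ^ i with hm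
  have hmodd : Odd m := by
    have hterm : ∀ i ∈ Finset.range r, d ^ i % 2 = 1 :=
      fun i _ => Nat.odd_iff.mp hdodd.pow
    have hr2 := Nat.odd_iff.mp hrodd
    rw [Nat.odd_iff, hm, Finset.sum_nat_mod, Finset.sum_congr rfl hterm,
      Finset.sum_const, Finset.card_range, smul_eq_mul, mul_one]
    omega
  have hcardd : Fintype.card F = d ^ r := by
    rw [hcard, hd, ← pow_mul, hr]
  -- the map is injective
  set c : F := u2 * δ ^ (d - 1) with hc
  have hcne : c ≠ 0 := mul_ne_zero hu2 (pow_ne_zero _ hδ)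
  have hcfac : c = (w * δ) ^ (d - 1) := by rw [mul_pow, hwu]
  have hinj : Function.Injective (fun x : F => x ^ d + c * x) := by
    intro x y hxy
    simp only at hxy
    by_contra hne
    set z : F := x - y with hz
    have hzne : z ≠ 0 := sub_ne_zero.mpr hne
    have hsub : z ^ d = x ^ d - y ^ d := by
      rw [hz, hd]
      exact sub_pow_expChar_pow x y s
    have hzeq : z ^ d + c * z = 0 := by
      rw [hsub, hz]
      linear_combination hxy
    have hzd : z ^ (d - 1) = -c := by
      have hzd' : z ^ (d - 1) * z = z ^ d := by
        rw [← pow_succ]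
        congr 1
        omega
      have h4 : z ^ (d - 1) * z = -c * z := by
        rw [hzd']
        linear_combination hzeq
      exact mul_right_cancel₀ hzne h4
    have hwδ : w * δ ≠ 0 := mul_ne_zero hw hδ
    set t : F := z / (w * δ) with ht
    have htne : t ≠ 0 := div_ne_zero hzne hwδ
    have htd : t ^ (d - 1) = -1 := by
      rw [ht, div_pow, ← hcfac, hzd, neg_div, div_self hcne]
    have h1 : t ^ ((d - 1) * m) = -1 := by
      rw [pow_mul, htd, Odd.neg_one_pow hmodd]
    have h2 : t ^ (Fintype.card F - 1) = 1 := FiniteField.pow_card_sub_one_eq_one t htne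
    rw [hcardd, ← hfact r, ← hm, h1] at h2
    have h20 : (2 : F) = 0 := by linear_combination -h2
    have hdvd2 : p ∣ 2 := (CharP.cast_eq_zero_iff F p 2).mp (by exact_mod_cast h20)
    exact hp2 ((Nat.prime_dvd_prime_iff_eq hp Nat.prime_two).mp hdvd2)
  have hsurj : Function.Surjective (fun x : F => x ^ d + c * x) :=
    Finite.surjective_of_injective hinj
  obtain ⟨x, hx⟩ := hsurj ξ
  exact ⟨x, hx, fun y hy => hinj (hy.trans hx.symm)⟩
end

section
/- Let p be an odd prime, s, n positive integers with 2n/s an odd integer, q = p^n, d = p^s. Then the map x ↦ x^d + x is a bijection (permutation) of F_{q^2}. -/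
/-- With `q = p^n`, `d = p^s`, `2n/s` odd, the map `x ↦ x^d + x` is a
bijection of `F_{q^2}`. -/
theorem stmt_12 {p s n r : ℕ} (hp : p.Prime) (hpodd : Odd p) (hs : 0 < s) (hn : 0 < n)
    (hr : s * r = 2 * n) (hrodd : Odd r)
    {F : Type*} [Field F] [Fintype F] (q d : ℕ) (hq : q = p ^ n) (hd : d = p ^ s)
    (hF : Fintype.card F = q ^ 2) :
    Function.Bijective (fun x : F => x ^ d + x) := by
  haveI := Fact.mk hp
  -- characteristic of F is p
  have hcard : Fintype.card F = p ^ (2 * n) := by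
    rw [hF, hq, ← pow_mul, Nat.mul_comm]
  have hcharP : CharP F p := by
    have h1 := ringChar.charP F
    obtain ⟨k, hk⟩ := FiniteField.card F (ringChar F)
    have hprime : (ringChar F).Prime := CharP.char_is_prime F (ringChar F)
    have hdvd : ringChar F ∣ p ^ (2 * n) := by
      rw [← hcard, hk.2]
      exact dvd_pow_self _ k.ne_zero
    have : ringChar F = p :=
      (Nat.prime_dvd_prime_iff_eq hprime hp).mp (hprime.dvd_of_dvd_pow hdvd)
    rwa [this] at h1
  have hp3 : 2 < p := by
    have h2 : p ≠ 2 := by rintro rfl; exact (by decide : ¬ Odd 2) hpodd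
    have := hp.two_le; omega
  haveI := Fact.mk hp3
  have hne : (-1 : F) ≠ 1 := CharP.neg_one_ne_one F p
  have hd1 : 1 ≤ d := by rw [hd]; exact Nat.one_le_pow _ _ hp.pos
  have hdodd : Odd d := by rw [hd]; exact hpodd.pow
  -- q^2 = d^r
  have hq2 : q ^ 2 = d ^ r := by
    rw [hq, hd, ← pow_mul, ← pow_mul, hr, Nat.mul_comm]
  set m : ℕ := ∑ i ∈ Finset.range r, d ^ i with hm
  have hmul : (d - 1) * m = d ^ r - 1 := by
    have h := geom_sum_mul (d : ℤ) r
    have h2 : ((m : ℕ) : ℤ) = ∑ i ∈ Finset.range r, (d : ℤ) ^ i := by push_cast [hm]; ring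
    have h3 : 1 ≤ d ^ r := Nat.one_le_pow _ _ (by omega)
    have : ((d : ℤ) - 1) * m = (d : ℤ) ^ r - 1 := by rw [h2]; linarith [h]
    zify [hd1, h3]
    linarith [this]
  have hmodd : Odd m := by
    rw [Nat.odd_iff]
    have : m % 2 = (∑ i ∈ Finset.range r, d ^ i % 2) % 2 := Finset.sum_nat_mod _ _ _
    have hd2 : d % 2 = 1 := Nat.odd_iff.mp hdodd
    have he : ∀ i, d ^ i % 2 = 1 := by
      intro i; rw [Nat.pow_mod, hd2, one_pow]; decide
    simp only [he] at this
    rw [this, Finset.sum_const, Finset.card_range, smul_eq_mul, mul_one]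
    exact Nat.odd_iff.mp hrodd
  -- main: injective
  have hinj : Function.Injective (fun x : F => x ^ d + x) := by
    intro a b hab
    simp only at hab
    set c := a - b with hc
    have hc0 : c ^ d + c = 0 := by
      have hfrob : c ^ d = a ^ d - b ^ d := by
        rw [hc, hd, sub_pow_char_pow]
      rw [hfrob, hc]; linear_combination hab
    by_contra hne'
    have hcne : c ≠ 0 := sub_ne_zero_of_ne hne'
    have hpow : c ^ (d - 1) = -1 := by
      have h1 : c ^ (d - 1) * c = -1 * c := by
        rw [← pow_succ, Nat.sub_add_cancel hd1, neg_one_mul]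
        linear_combination hc0
      exact mul_right_cancel₀ hcne h1
    have hone : c ^ (d ^ r - 1) = 1 := by
      have := FiniteField.pow_card_sub_one_eq_one c hcne
      rwa [hF, hq2] at this
    have : c ^ (d ^ r - 1) = -1 := by
      rw [← hmul, pow_mul, hpow, hmodd.neg_one_pow]
    rw [hone] at this
    exact hne this.symm
  exact (Finite.injective_iff_bijective).mp hinj
end

section
/- Let p be an odd prime, q = p^n, d = p^s with 2n/s an odd integer, and f(X) = X^{d+1} ∈ F_{q^2}[X]. Define the graph A_{q^2,d} with vertex set F_{q^2} × F_{q^2} where distinct vertices (a^d + a, x) and (b^d + b, y) are adjacent iff a^d b + a b^d = x + y. Then the map τ((a^d + a, x)) = (a, x + a^{d+1}) is a graph isomorphism from A_{q^2,d} to the subgraph of G_f induced by F_{q^2} × F_{q^2}. -/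
/-- With `f(X) = X^{d+1}`, the map `τ((a^d + a, x)) = (a, x + a^{d+1})` is a
graph isomorphism from `A_{q^2,d}` (vertices `F_{q^2} × F_{q^2}`, distinct `(a^d+a, x)` and
`(b^d+b, y)` adjacent iff `a^d b + a b^d = x + y`) to the subgraph of `G_f` induced by
`F_{q^2} × F_{q^2}` (distinct `(x1,y1) ~ (x2,y2)` iff `(x1+x2)^{d+1} = y1 + y2`). -/
theorem stmt_13 {p s n r : ℕ} (hp : p.Prime) (hpodd : Odd p) (hs : 0 < s) (hn : 0 < n)
    (hr : s * r = 2 * n) (hrodd : Odd r)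
    {F : Type*} [Field F] [Fintype F] (q d : ℕ) (hq : q = p ^ n) (hd : d = p ^ s)
    (hF : Fintype.card F = q ^ 2)
    (A : SimpleGraph (F × F))
    (hA : A = SimpleGraph.fromRel (fun u v => ∃ a b : F,
      a ^ d + a = u.1 ∧ b ^ d + b = v.1 ∧ a ^ d * b + a * b ^ d = u.2 + v.2))
    (Gf : SimpleGraph (F × F))
    (hGf : Gf = SimpleGraph.fromRel (fun u v => (u.1 + v.1) ^ (d + 1) = u.2 + v.2)) :
    ∃ φ : A ≃g Gf, ∀ a x : F, φ (a ^ d + a, x) = (a, x + a ^ (d + 1)) := by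
  subst hq hd hA hGf
  -- characteristic
  have hp' : (ringChar F).Prime := CharP.char_is_prime F _
  obtain ⟨m, hm, hcard⟩ := FiniteField.card F (ringChar F)
  have hpr : ringChar F = p := by
    have h2n : Fintype.card F = p ^ (2 * n) := by rw [hF]; ring
    have : p ∣ ringChar F ^ (m : ℕ) := by
      rw [← hcard, h2n]
      exact dvd_pow_self p (by omega)
    have := (Nat.Prime.dvd_of_dvd_pow hp this)
    exact ((Nat.prime_dvd_prime_iff_eq hp hp').mp this).symm
  have hchar : CharP F p := hpr ▸ ringChar.charP F
  have hps_odd : Odd (p ^ s) := hpodd.pow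
  -- key: c ^ p^s = -c → c = 0
  have hkey : ∀ c : F, c ^ (p ^ s) = -c → c = 0 := by
    intro c hc
    have hiter : ∀ k : ℕ, c ^ (p ^ (s * k)) = (-1) ^ k * c := by
      intro k
      induction k with
      | zero => simp
      | succ k ih =>
        have h1 : c ^ (p ^ (s * (k + 1))) = (c ^ (p ^ (s * k))) ^ (p ^ s) := by
          rw [← pow_mul, ← pow_add, Nat.mul_succ]
        rw [h1, ih, mul_pow, hc, ← pow_mul, mul_comm k (p ^ s), pow_mul,
          hps_odd.neg_one_pow, pow_succ]
        ring
    have := hiter r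
    rw [hr, hrodd.neg_one_pow] at this
    have hc2 : c ^ (p ^ (2 * n)) = c := by
      have h2n : Fintype.card F = p ^ (2 * n) := by rw [hF]; ring
      rw [← h2n]; exact FiniteField.pow_card c
    rw [hc2] at this
    have h2 : (2 : F) * c = 0 := by linear_combination this
    rcases mul_eq_zero.mp h2 with h | h
    · exfalso
      have hd2 : (p : ℕ) ∣ 2 := (CharP.cast_eq_zero_iff F p 2).mp (by exact_mod_cast h)
      have hp2 : p = 2 := (Nat.prime_dvd_prime_iff_eq hp Nat.prime_two).mp hd2
      rw [hp2, Nat.odd_iff] at hpodd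
      omega
    · exact h
  haveI : Fact p.Prime := ⟨hp⟩
  set g : F → F := fun a => a ^ (p ^ s) + a with hg
  have hinj : Function.Injective g := by
    intro a b hab
    have h1 : (a - b) ^ (p ^ s) = -(a - b) := by
      rw [sub_pow_char_pow a b]
      simp only [hg] at hab
      linear_combination hab
    exact sub_eq_zero.mp (hkey _ h1)
  have hbij : Function.Bijective g := (Finite.injective_iff_bijective).mp hinj
  let e : F ≃ F := Equiv.ofBijective g hbij
  have hsymm : ∀ a : F, e.symm (a ^ (p ^ s) + a) = a := fun a => e.symm_apply_eq.mpr rfl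
  have happ : ∀ y : F, (e.symm y) ^ (p ^ s) + e.symm y = y := fun y => e.apply_symm_apply y
  let φ : F × F ≃ F × F :=
    { toFun := fun u => (e.symm u.1, u.2 + (e.symm u.1) ^ (p ^ s + 1))
      invFun := fun v => (e v.1, v.2 - v.1 ^ (p ^ s + 1))
      left_inv := by intro u; simp
      right_inv := by intro v; simp }
  have hexp : ∀ x y : F, (x + y) ^ (p ^ s + 1)
      = x ^ (p ^ s + 1) + x ^ (p ^ s) * y + x * y ^ (p ^ s) + y ^ (p ^ s + 1) := by
    intro x y
    rw [pow_succ, add_pow_char_pow]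
    ring
  refine ⟨⟨φ, ?_⟩, ?_⟩
  · intro u v
    simp only [SimpleGraph.fromRel_adj]
    set a := e.symm u.1 with ha'
    set b := e.symm v.1 with hb'
    have ha : a ^ (p ^ s) + a = u.1 := happ u.1
    have hb : b ^ (p ^ s) + b = v.1 := happ v.1
    constructor
    · rintro ⟨hne, h | h⟩ <;>
      · refine ⟨fun hh => hne (by rw [hh]), Or.inl ⟨a, b, ha, hb, ?_⟩⟩
        simp only [φ, Equiv.coe_fn_mk] at h
        linear_combination h - hexp a b
    · rintro ⟨hne, h | h⟩
      · obtain ⟨a', b', ha1, hb1, h3⟩ := h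
        have haa : a' = a := hinj (ha1.trans ha.symm)
        have hbb : b' = b := hinj (hb1.trans hb.symm)
        subst haa hbb
        refine ⟨fun hh => hne (φ.injective hh), Or.inl ?_⟩
        simp only [φ, Equiv.coe_fn_mk]
        linear_combination h3 + hexp a b
      · obtain ⟨a', b', ha1, hb1, h3⟩ := h
        have haa : a' = b := hinj (ha1.trans hb.symm)
        have hbb : b' = a := hinj (hb1.trans ha.symm)
        subst haa hbb
        refine ⟨fun hh => hne (φ.injective hh), Or.inl ?_⟩
        simp only [φ, Equiv.coe_fn_mk]
        linear_combination h3 + hexp a b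
  · intro a x
    show (e.symm (a ^ (p ^ s) + a), x + (e.symm (a ^ (p ^ s) + a)) ^ (p ^ s + 1)) = _
    rw [hsymm a]
end

section
/- Let p be an odd prime, q = p^n, d = p^s with 2n/s odd. Fix μ ∈ F_{q^2} \ F_q with μ^d = u1 + u2 μ (u1, u2 ∈ F_q). In the graph A_{q^2,d} (vertices F_{q^2} × F_{q^2}, with (a^d+a, x) ~ (b^d+b, y) iff a^d b + a b^d = x + y), the set I^+ = {(a^d + a, x1 + x2 μ) : a, x1 ∈ F_q, x2 ∈ F_q^+} is an independent set, where F_q^+ ⊆ F_q^* contains exactly one of {c, -c} for each c ∈ F_q^*. -/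
/-- In the graph `A_{q^2,d}`, the set
`I^+ = {(a^d + a, x1 + x2 μ) : a, x1 ∈ F_q, x2 ∈ F_q^+}` is an independent set, where
`μ ∈ F_{q^2} \ F_q` satisfies `μ^d = u1 + u2 μ` with `u1, u2 ∈ F_q`, and `F_q^+ ⊆ F_q^*`
contains exactly one of `{c, -c}` for each nonzero `c` in the subfield. -/
theorem stmt_14 {p s n r : ℕ} (hp : p.Prime) (hpodd : Odd p) (hs : 0 < s) (hn : 0 < n)
    (hr : s * r = 2 * n) (hrodd : Odd r)
    {F : Type*} [Field F] [Fintype F] (q d : ℕ) (hq : q = p ^ n) (hd : d = p ^ s)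
    (hF : Fintype.card F = q ^ 2)
    (μ u1 u2 : F) (hμ : μ ^ q ≠ μ) (hu1 : u1 ^ q = u1) (hu2 : u2 ^ q = u2)
    (hμd : μ ^ d = u1 + u2 * μ)
    (P : Set F) (hPmem : ∀ a ∈ P, a ^ q = a ∧ a ≠ 0)
    (hP : ∀ a : F, a ^ q = a → a ≠ 0 → (a ∈ P ↔ -a ∉ P))
    (A : SimpleGraph (F × F))
    (hA : A = SimpleGraph.fromRel (fun u v => ∃ a b : F,
      a ^ d + a = u.1 ∧ b ^ d + b = v.1 ∧ a ^ d * b + a * b ^ d = u.2 + v.2))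
    (I : Set (F × F))
    (hI : I = {v | ∃ a x1 x2 : F, a ^ q = a ∧ x1 ^ q = x1 ∧ x2 ∈ P ∧
      v = (a ^ d + a, x1 + x2 * μ)}) :
    I.Pairwise fun u v => ¬ A.Adj u v := by
  haveI hfp : Fact p.Prime := ⟨hp⟩
  -- Characteristic of F is p
  have hcharP : CharP F p := by
    obtain ⟨p', hp'inst⟩ := CharP.exists F
    haveI := hp'inst
    have hp'prime : p'.Prime := CharP.char_is_prime F p'
    obtain ⟨m, -, hcard⟩ := FiniteField.card F p'
    have hdvd : p ∣ p' ^ (m : ℕ) := by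
      rw [← hcard, hF, hq]
      exact dvd_pow (dvd_pow_self p hn.ne') (by positivity)
    have : p = p' := ((Nat.prime_dvd_prime_iff_eq hp hp'prime).mp
      (hp.dvd_of_dvd_pow hdvd))
    rwa [this]
  haveI := hcharP
  have hp2 : p ≠ 2 := by rintro rfl; simp [Nat.odd_iff] at hpodd
  have h2ne : (2 : F) ≠ 0 := by
    have hnd : ¬ p ∣ 2 := fun h => hp2 ((Nat.prime_dvd_prime_iff_eq hp Nat.prime_two).mp h)
    have := (CharP.cast_eq_zero_iff F p 2).not.mpr hnd
    simpa using this
  -- x ^ q^2 = x for all x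
  have hq2 : ∀ x : F, x ^ (q ^ 2) = x := by
    intro x
    rw [← hF]; exact FiniteField.pow_card x
  -- frobenius facts
  have hfrobq : ∀ x y : F, (x + y) ^ q = x ^ q + y ^ q := by
    intro x y; rw [hq]; exact add_pow_char_pow ..
  have hfrobdsub : ∀ x y : F, (x - y) ^ d = x ^ d - y ^ d := by
    intro x y; rw [hd]; exact sub_pow_char_pow ..
  have hdodd : Odd d := by rw [hd]; exact hpodd.pow
  -- key : if t^d = -t then t = 0
  have hkey : ∀ t : F, t ^ d = -t → t = 0 := by
    intro t ht
    have hiter : ∀ k : ℕ, t ^ (d ^ k) = (-1 : F) ^ k * t := by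
      intro k
      induction k with
      | zero => simp
      | succ k ih =>
        calc t ^ d ^ (k + 1) = (t ^ d ^ k) ^ d := by rw [← pow_mul, pow_succ]
          _ = ((-1 : F) ^ k) ^ d * t ^ d := by rw [ih, mul_pow]
          _ = (-1 : F) ^ k * -t := by
              rw [ht, ← pow_mul, mul_comm k d, pow_mul, hdodd.neg_one_pow]
          _ = (-1 : F) ^ (k + 1) * t := by ring
    have hdr : d ^ r = q ^ 2 := by
      rw [hd, hq, ← pow_mul, ← pow_mul, hr, mul_comm]
    have heq := hiter r
    rw [hdr, hq2 t, hrodd.neg_one_pow] at heq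
    have h2t : (2 : F) * t = 0 := by linear_combination heq
    rcases mul_eq_zero.mp h2t with h | h
    · exact absurd h h2ne
    · exact h
  -- main argument as a symmetric helper
  have main : ∀ α β a b x1 x2 y1 y2 : F, α ^ q = α → β ^ q = β →
      x1 ^ q = x1 → y1 ^ q = y1 → x2 ∈ P → y2 ∈ P →
      a ^ d + a = α ^ d + α → b ^ d + b = β ^ d + β →
      a ^ d * b + a * b ^ d = (x1 + x2 * μ) + (y1 + y2 * μ) → False := by
    intro α β a b x1 x2 y1 y2 hα hβ hx1 hy1 hx2 hy2 ha hb hw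
    -- any preimage of a value in the image of F_q is itself in F_q
    have hfix : ∀ (c γ : F), γ ^ q = γ → c ^ d + c = γ ^ d + γ → c ^ q = c := by
      intro c γ hγ hc
      have h1 : (c ^ d) ^ q + c ^ q = c ^ d + c := by
        rw [← hfrobq, hc, hfrobq, ← pow_mul, mul_comm d q, pow_mul, hγ]
      have ht : (c ^ q - c) ^ d = -(c ^ q - c) := by
        rw [hfrobdsub, ← pow_mul, mul_comm q d, pow_mul]
        linear_combination h1
      have := hkey _ ht
      linear_combination this
    have haq : a ^ q = a := hfix a α hα ha
    have hbq : b ^ q = b := hfix b β hβ hb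
    -- w is fixed by Frobenius^n
    have had : (a ^ d) ^ q = a ^ d := by rw [← pow_mul, mul_comm, pow_mul, haq]
    have hbd : (b ^ d) ^ q = b ^ d := by rw [← pow_mul, mul_comm, pow_mul, hbq]
    have hwq : (a ^ d * b + a * b ^ d) ^ q = a ^ d * b + a * b ^ d := by
      rw [hfrobq, mul_pow, mul_pow, had, hbd, haq, hbq]
    obtain ⟨hx2q, hx2ne⟩ := hPmem _ hx2
    obtain ⟨hy2q, hy2ne⟩ := hPmem _ hy2
    rw [hw] at hwq
    have hwq2 : (x1 + y1) + (x2 + y2) * μ ^ q = (x1 + y1) + (x2 + y2) * μ := by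
      calc (x1 + y1) + (x2 + y2) * μ ^ q
          = ((x1 + x2 * μ) + (y1 + y2 * μ)) ^ q := by
            rw [hfrobq, hfrobq, hfrobq, mul_pow, mul_pow, hx1, hy1, hx2q, hy2q]; ring
        _ = (x1 + y1) + (x2 + y2) * μ := by rw [hwq]; ring
    have hsum : x2 + y2 = 0 := by
      by_contra hne
      apply hμ
      have : (x2 + y2) * μ ^ q = (x2 + y2) * μ := by linear_combination hwq2
      exact mul_left_cancel₀ hne this
    have hx2eq : x2 = -y2 := by linear_combination hsum
    exact ((hP y2 hy2q hy2ne).mp hy2) (hx2eq ▸ hx2)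
  intro u hu v hv _ hadj
  rw [hI] at hu hv
  obtain ⟨α, x1, x2, hα, hx1, hx2, hueq⟩ := hu
  obtain ⟨β, y1, y2, hβ, hy1, hy2, hveq⟩ := hv
  rw [hA, SimpleGraph.fromRel_adj] at hadj
  obtain ⟨-, ⟨a, b, ha, hb, hw⟩ | ⟨a, b, ha, hb, hw⟩⟩ := hadj
  · exact main α β a b x1 x2 y1 y2 hα hβ hx1 hy1 hx2 hy2
      (by rw [ha, hueq]) (by rw [hb, hveq]) (by rw [hw, hueq, hveq])
  · exact main β α a b y1 y2 x1 x2 hβ hα hy1 hx1 hy2 hx2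
      (by rw [ha, hveq]) (by rw [hb, hueq]) (by rw [hw, hueq, hveq])
end

section
/- Let p be an odd prime, q = p^n, d = p^s with 2n/s odd. For any α ∈ F_{q^2} and k = α^d + α, the map φ_k((a^d + a, x)) = (a^d + a + k, x + a^d α + a α^d + α^{d+1}) is an automorphism of the graph A_{q^2,d}. -/
/-- For any `α ∈ F_{q^2}` and `k = α^d + α`, the map
`φ_k((a^d + a, x)) = (a^d + a + k, x + a^d α + a α^d + α^{d+1})` is an automorphism of the
graph `A_{q^2,d}`. -/
theorem stmt_15 {p s n r : ℕ} (hp : p.Prime) (hpodd : Odd p) (hs : 0 < s) (hn : 0 < n)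
    (hr : s * r = 2 * n) (hrodd : Odd r)
    {F : Type*} [Field F] [Fintype F] (q d : ℕ) (hq : q = p ^ n) (hd : d = p ^ s)
    (hF : Fintype.card F = q ^ 2)
    (A : SimpleGraph (F × F))
    (hA : A = SimpleGraph.fromRel (fun u v => ∃ a b : F,
      a ^ d + a = u.1 ∧ b ^ d + b = v.1 ∧ a ^ d * b + a * b ^ d = u.2 + v.2))
    (α : F) :
    ∃ φ : A ≃g A, ∀ a x : F,
      φ (a ^ d + a, x) = (a ^ d + a + (α ^ d + α), x + a ^ d * α + a * α ^ d + α ^ (d + 1)) := by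
  haveI hpf : Fact p.Prime := ⟨hp⟩
  -- characteristic
  have hcard : Fintype.card F = d ^ r := by
    rw [hF, hq, hd, ← pow_mul, ← pow_mul]; congr 1; omega
  have hcharF : CharP F p := by
    obtain ⟨m, hm, hcard'⟩ := FiniteField.card F (ringChar F)
    have h1 : ringChar F ∣ Fintype.card F := by
      rw [hcard']; exact dvd_pow_self _ (by exact_mod_cast m.pos.ne')
    rw [hF, hq, ← pow_mul] at h1
    have h2 : ringChar F = p :=
      (Nat.prime_dvd_prime_iff_eq hm hp).mp (hm.dvd_of_dvd_pow h1)
    exact h2 ▸ ringChar.charP F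
  haveI := hcharF
  haveI : ExpChar F p := ExpChar.prime hp
  -- basic facts about d
  have hd1 : 1 ≤ d := hd ▸ Nat.one_le_pow s p hp.pos
  have hdodd : Odd d := hd ▸ hpodd.pow
  have hadd : ∀ x y : F, (x + y) ^ d = x ^ d + y ^ d := by
    intro x y; rw [hd]; exact add_pow_char_pow (R := F) (x := x) (y := y) (p := p) (n := s)
  have hsub : ∀ x y : F, (x - y) ^ d = x ^ d - y ^ d := by
    intro x y
    rw [sub_eq_add_neg, hadd, hdodd.neg_pow, sub_eq_add_neg]
  -- the geometric sum
  set m := ∑ i ∈ Finset.range r, d ^ i with hm_def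
  have hgeom : (d - 1) * m = Fintype.card F - 1 := by
    rw [hcard]
    have hdr1 : 1 ≤ d ^ r := Nat.one_le_pow _ _ (lt_of_lt_of_le zero_lt_one hd1)
    zify [hd1, hdr1, hm_def]
    push_cast
    linear_combination geom_sum_mul (d : ℤ) r
  have hmodd : Odd m := by
    rw [Nat.odd_iff]
    rw [hm_def, Finset.sum_nat_mod]
    rw [Finset.sum_congr rfl (fun i _ => Nat.odd_iff.mp (hdodd.pow) :
      ∀ i ∈ Finset.range r, d ^ i % 2 = 1)]
    simp [Nat.odd_iff.mp hrodd]
  -- injectivity of x ↦ x^d + x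
  have hker : ∀ x : F, x ^ d + x = 0 → x = 0 := by
    intro x hx
    by_contra hx0
    have h1 : x ^ d = -x := eq_neg_of_add_eq_zero_left hx
    have h2 : x ^ (d - 1) = -1 := by
      refine mul_right_cancel₀ hx0 ?_
      rw [← pow_succ, Nat.sub_add_cancel hd1, h1, neg_one_mul]
    have h3 : x ^ (Fintype.card F - 1) = 1 := FiniteField.pow_card_sub_one_eq_one x hx0
    rw [← hgeom, pow_mul, h2, hmodd.neg_one_pow] at h3
    have h4 : (2 : F) = 0 := by linear_combination -h3
    have h5 : (p : ℕ) ∣ 2 := (CharP.cast_eq_zero_iff F p 2).mp (by exact_mod_cast h4)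
    have h6 : p = 2 := (Nat.prime_dvd_prime_iff_eq hp Nat.prime_two).mp h5
    rw [h6] at hpodd
    exact absurd hpodd (by decide)
  have hinj : Function.Injective (fun x : F => x ^ d + x) := by
    intro x y hxy
    have : (x - y) ^ d + (x - y) = 0 := by
      rw [hsub]
      simp only at hxy
      linear_combination hxy
    exact sub_eq_zero.mp (hker _ this)
  -- the bijection τ x = x^d + x
  let τ : F ≃ F := Equiv.ofBijective _ (Finite.injective_iff_bijective.mp hinj)
  have hτ : ∀ x : F, τ x = x ^ d + x := fun _ => rfl
  have hτsymm : ∀ x : F, τ.symm (x ^ d + x) = x := fun x => by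
    rw [← hτ]; exact τ.symm_apply_apply x
  set k : F := α ^ d + α with hk
  set g : F → F := fun t => (τ.symm t) ^ d * α + (τ.symm t) * α ^ d + α ^ (d + 1) with hg
  have hgval : ∀ a : F, g (a ^ d + a) = a ^ d * α + a * α ^ d + α ^ (d + 1) := by
    intro a; rw [hg]; simp only [hτsymm]
  -- the underlying equiv
  let e : F × F ≃ F × F :=
    { toFun := fun u => (u.1 + k, u.2 + g u.1)
      invFun := fun u => (u.1 - k, u.2 - g (u.1 - k))
      left_inv := fun u => by simp
      right_inv := fun u => by simp }
  have he : ∀ u : F × F, e u = (u.1 + k, u.2 + g u.1) := fun _ => rfl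
  -- the relation
  set rel : F × F → F × F → Prop := fun u v => ∃ a b : F,
      a ^ d + a = u.1 ∧ b ^ d + b = v.1 ∧ a ^ d * b + a * b ^ d = u.2 + v.2 with hrel_def
  have hfwd : ∀ u v, rel u v → rel (e u) (e v) := by
    rintro u v ⟨a, b, ha, hb, hab⟩
    refine ⟨a + α, b + α, ?_, ?_, ?_⟩
    · rw [he, hadd, ← ha]; ring
    · rw [he, hadd, ← hb]; ring
    · rw [he, he]
      simp only
      rw [← ha, ← hb, hgval, hgval, hadd, hadd]
      have hα : α ^ (d + 1) = α ^ d * α := by rw [pow_succ]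
      rw [hα]
      linear_combination hab
  have hbwd : ∀ u v, rel (e u) (e v) → rel u v := by
    rintro u v ⟨a, b, ha, hb, hab⟩
    rw [he u] at ha
    rw [he v] at hb
    rw [he u, he v] at hab
    simp only at ha hb hab
    have ha' : (a - α) ^ d + (a - α) = u.1 := by
      rw [hsub]; rw [hk] at ha; linear_combination ha
    have hb' : (b - α) ^ d + (b - α) = v.1 := by
      rw [hsub]; rw [hk] at hb; linear_combination hb
    refine ⟨a - α, b - α, ha', hb', ?_⟩
    rw [← ha', ← hb', hgval, hgval] at hab
    rw [hsub a α, hsub b α] at hab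
    rw [hsub a α, hsub b α]
    have hα : α ^ (d + 1) = α ^ d * α := by rw [pow_succ]
    rw [hα] at hab
    linear_combination hab
  -- build the graph isomorphism
  subst hA
  refine ⟨⟨e, ?_⟩, ?_⟩
  · intro u v
    simp only [SimpleGraph.fromRel_adj, ← hrel_def]
    constructor
    · rintro ⟨hne, h | h⟩
      · exact ⟨fun h' => hne (congrArg e h'), Or.inl (hbwd _ _ h)⟩
      · exact ⟨fun h' => hne (congrArg e h'), Or.inr (hbwd _ _ h)⟩
    · rintro ⟨hne, h | h⟩
      · exact ⟨e.injective.ne hne, Or.inl (hfwd _ _ h)⟩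
      · exact ⟨e.injective.ne hne, Or.inr (hfwd _ _ h)⟩
  · intro a x
    show e (a ^ d + a, x) = _
    rw [he]
    simp only [hgval]
    ext <;> simp <;> ring
end

section
/- Let p be an odd prime, q = p^n, d = p^s with 2n/s an odd integer ≥ 3. Fix μ ∈ F_{q^2} \ F_q with μ^d = u1 + u2 μ and μ^{d+1} = w1 + w2 μ (u1,u2,w1,w2 ∈ F_q), where u2 is a (d-1)-th power in F_{q^2}^*. Let X = {((a + βμ)^d + (a + βμ), t1 + (a^d β + a β^d u2 + β^{d+1} w2)μ) : a, β, t1 ∈ F_q} ⊆ V(A_{q^2,d}). Then every vertex of X has at most 2q - 1 neighbors within X; i.e., the induced subgraph A_{q^2,d}[X] has maximum degree less than 2q. -/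
/-!
Write the vertices of `X` as `P(a, β, t)` with `a, β, t ∈ F_q`. Since `z ↦ z^d + z` is injective
(a root of `z^d = -z` satisfies `z^{d^r} = (-1)^r z = -z`, while `d^r = q²`), adjacency of
`P(a, β, t)` and `P(a₁, γ, t₁)` is a single equation over `F_{q²}`. For two neighbours with the
same `γ`, the `μ`-coordinate of the difference of their equations reads
`δ^d (β - γ) + u₂ δ (β - γ)^d = 0` with `δ = a₁ - a₂`; writing `u₂ = w^{d-1}`, this says that
`δ / (w (β - γ))` is again a root of `z^d + z` when `γ ≠ β`, so `δ = 0`, and then `t₁ = t₂`.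
Hence each `γ ≠ β` carries at most one neighbour and `γ = β` at most `q`: `(q - 1) + q` in all.
-/

open Function Polynomial

theorem pow_pow_eq_neg_one_pow_mul {R : Type*} [CommRing R] {d : ℕ} (hd : Odd d) {z : R}
    (hz : z ^ d = -z) (k : ℕ) : z ^ d ^ k = (-1) ^ k * z := by
  induction k with
  | zero => simp
  | succ k ih =>
    rw [pow_succ, pow_mul, ih, mul_pow, hz, ← pow_mul, mul_comm k, pow_mul, hd.neg_one_pow]
    ring

theorem eq_zero_of_pow_add_self_eq_zero {F : Type*} [Field F] [Fintype F] {d r : ℕ}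
    (hd : Odd d) (hr : Odd r) (hcard : Fintype.card F = d ^ r) {z : F} (hz : z ^ d + z = 0) :
    z = 0 := by
  have hchar : ringChar F ≠ 2 := fun h ↦ by
    have := FiniteField.even_card_iff_char_two.mp h
    rw [hcard, ← Nat.even_iff] at this
    exact Nat.not_even_iff_odd.mpr hd.pow this
  have h := pow_pow_eq_neg_one_pow_mul hd (eq_neg_of_add_eq_zero_left hz) r
  rw [← hcard, FiniteField.pow_card, hr.neg_one_pow, neg_one_mul] at h
  exact (Ring.eq_self_iff_eq_zero_of_char_ne_two hchar).mp h.symm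

theorem eq_zero_of_pow_mul_add_mul_pow_eq_zero {F : Type*} [Field F] [Fintype F] {d r : ℕ}
    (hd : Odd d) (hr : Odd r) (hcard : Fintype.card F = d ^ r) {w ε δ : F} (hw : w ≠ 0)
    (hε : ε ≠ 0) (h : δ ^ d * ε + w ^ (d - 1) * δ * ε ^ d = 0) : δ = 0 := by
  obtain ⟨e, rfl⟩ : ∃ e, d = e + 1 := ⟨d - 1, (Nat.sub_add_cancel hd.pos).symm⟩
  rw [Nat.add_sub_cancel] at h
  suffices (δ / (w * ε)) ^ (e + 1) + δ / (w * ε) = 0 by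
    simpa [hw, hε] using eq_zero_of_pow_add_self_eq_zero hd hr hcard this
  have hscale : ((δ / (w * ε)) ^ (e + 1) + δ / (w * ε)) * (w ^ (e + 1) * ε ^ (e + 2)) =
      δ ^ (e + 1) * ε + w ^ e * δ * ε ^ (e + 1) := by
    rw [div_pow, mul_pow]
    field_simp
    ring
  rw [h] at hscale
  exact (mul_eq_zero.mp hscale).resolve_right (by positivity)

theorem Subfield.eq_zero_of_add_mul_eq_zero {F : Type*} [Field F] (K : Subfield F) {μ x y : F}
    (hμ : μ ∉ K) (hx : x ∈ K) (hy : y ∈ K) (h : x + y * μ = 0) : x = 0 ∧ y = 0 := by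
  rcases eq_or_ne y 0 with rfl | hy0
  · simpa using h
  · refine absurd ?_ hμ
    rw [show μ = -x / y by field_simp; linear_combination h]
    exact K.div_mem (K.neg_mem hx) hy

section Frobenius

variable {F : Type*} [Field F] (p : ℕ) [ExpChar F p]

def frobeniusFixedField (n : ℕ) : Subfield F := (iterateFrobenius F p n).eqLocusField (RingHom.id F)

variable {p}

theorem mem_frobeniusFixedField {n : ℕ} {x : F} : x ∈ frobeniusFixedField p n ↔ x ^ p ^ n = x :=
  Iff.rfl

theorem ncard_frobeniusFixedField_le {n : ℕ} (hp : 1 < p) (hn : n ≠ 0) :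
    (frobeniusFixedField (F := F) p n : Set F).ncard ≤ p ^ n := by
  calc _ ≤ ((X ^ p ^ n - X : F[X]).rootSet F).ncard := by
        refine Set.ncard_le_ncard (fun x hx ↦ ?_) (rootSet_finite _ _)
        rw [SetLike.mem_coe, mem_frobeniusFixedField] at hx
        exact mem_rootSet.mpr ⟨FiniteField.X_pow_card_pow_sub_X_ne_zero F hn hp, by simp [hx]⟩
    _ ≤ p ^ n := (ncard_rootSet_le _ F).trans
        (FiniteField.X_pow_card_pow_sub_X_natDegree_eq F hn hp).le

theorem pow_add_self_injective [Fintype F] {s r : ℕ} (hp : Odd p) (hr : Odd r)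
    (hcard : Fintype.card F = (p ^ s) ^ r) : Injective fun z : F ↦ z ^ p ^ s + z := by
  intro x y h
  refine sub_eq_zero.mp (eq_zero_of_pow_add_self_eq_zero hp.pow hr hcard ?_)
  rw [sub_pow_expChar_pow]
  linear_combination h

end Frobenius

theorem ncard_le_two_mul_sub_one {α γ : Type*} [Finite α] [Finite γ] {K : Set α} {q : ℕ}
    (hK : K.ncard ≤ q) {b : α} (hb : b ∈ K) {S : Set γ} {f g : γ → α} (hf : Set.MapsTo f S K)
    (hg : Set.MapsTo g S K) (hS : ∀ x ∈ S, ∀ y ∈ S, f x = f y → (f x ≠ b ∨ g x = g y) → x = y) :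
    S.ncard ≤ 2 * q - 1 := by
  rw [← Set.ncard_inter_add_ncard_sdiff_eq_ncard S {x | f x = b}]
  have hon : (S ∩ {x | f x = b}).ncard ≤ K.ncard :=
    Set.ncard_le_ncard_of_injOn g (fun x hx ↦ hg hx.1)
      fun x hx y hy hxy ↦ hS x hx.1 y hy.1 (hx.2.trans hy.2.symm) (Or.inr hxy)
  have hoff : (S \ {x | f x = b}).ncard ≤ (K \ {b}).ncard :=
    Set.ncard_le_ncard_of_injOn f (fun x hx ↦ ⟨hf hx.1, hx.2⟩)
      fun x hx y hy hxy ↦ hS x hx.1 y hy.1 hxy (Or.inl hx.2)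
  rw [Set.ncard_sdiff_singleton_of_mem hb] at hoff
  have := (Set.ncard_pos K.toFinite).mpr ⟨b, hb⟩
  omega

theorem pow_mul_add_mul_pow_eq_of_adj {R : Type*} [CommRing R] {d : ℕ}
    (hinj : Injective fun z : R ↦ z ^ d + z) {x y s t : R}
    (h : (SimpleGraph.fromRel fun u v : R × R ↦ ∃ a b : R,
      a ^ d + a = u.1 ∧ b ^ d + b = v.1 ∧ a ^ d * b + a * b ^ d = u.2 + v.2).Adj
        (x ^ d + x, s) (y ^ d + y, t)) :
    x ^ d * y + x * y ^ d = s + t := by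
  obtain ⟨-, ⟨a, b, ha, hb, hab⟩ | ⟨a, b, ha, hb, hab⟩⟩ := h
  · obtain rfl := hinj ha
    obtain rfl := hinj hb
    exact hab
  · obtain rfl := hinj ha
    obtain rfl := hinj hb
    linear_combination hab

section Neighbours

variable {F : Type*} [Field F] {p s : ℕ} [ExpChar F p] {K : Subfield F} {μ u₁ u₂ : F}
  {a β γ a₁ a₂ t₁ t₂ T c : F}

theorem sub_relation_of_neighbour_eqs (hμ : μ ∉ K) (hu₁ : u₁ ∈ K) (hu₂ : u₂ ∈ K)
    (hμd : μ ^ p ^ s = u₁ + u₂ * μ) (ha : a ∈ K) (hβ : β ∈ K) (hγ : γ ∈ K) (ha₁ : a₁ ∈ K)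
    (ha₂ : a₂ ∈ K) (ht₁ : t₁ ∈ K) (ht₂ : t₂ ∈ K)
    (E₁ : (a + β * μ) ^ p ^ s * (a₁ + γ * μ) + (a + β * μ) * (a₁ + γ * μ) ^ p ^ s =
      T + (t₁ + (a₁ ^ p ^ s * γ + a₁ * γ ^ p ^ s * u₂ + c) * μ))
    (E₂ : (a + β * μ) ^ p ^ s * (a₂ + γ * μ) + (a + β * μ) * (a₂ + γ * μ) ^ p ^ s =
      T + (t₂ + (a₂ ^ p ^ s * γ + a₂ * γ ^ p ^ s * u₂ + c) * μ)) :
    (a₁ - a₂) ^ p ^ s * (β - γ) + u₂ * (a₁ - a₂) * (β - γ) ^ p ^ s = 0 := by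
  have hfrob : ∀ x y : F, (x + y * μ) ^ p ^ s = x ^ p ^ s + y ^ p ^ s * u₁ + y ^ p ^ s * u₂ * μ :=
    fun x y ↦ by rw [add_pow_expChar_pow, mul_pow, hμd]; ring
  simp only [hfrob] at E₁ E₂
  have hsplit := K.eq_zero_of_add_mul_eq_zero hμ
    (x := (a ^ p ^ s + β ^ p ^ s * u₁) * (a₁ - a₂) + a * (a₁ ^ p ^ s - a₂ ^ p ^ s) - (t₁ - t₂))
    (y := β ^ p ^ s * u₂ * (a₁ - a₂) + β * (a₁ ^ p ^ s - a₂ ^ p ^ s)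
      - (a₁ ^ p ^ s - a₂ ^ p ^ s) * γ - (a₁ - a₂) * γ ^ p ^ s * u₂)
    (by apply_rules [K.add_mem, K.sub_mem, K.mul_mem, K.pow_mem])
    (by apply_rules [K.add_mem, K.sub_mem, K.mul_mem, K.pow_mem])
    (by linear_combination E₁ - E₂)
  rw [sub_pow_expChar_pow, sub_pow_expChar_pow]
  linear_combination hsplit.2

theorem eq_and_eq_of_neighbour_eqs [Fintype F] {r : ℕ} (hp : Odd p) (hr : Odd r)
    (hcard : Fintype.card F = (p ^ s) ^ r) (hμ : μ ∉ K) (hu₁ : u₁ ∈ K) (hu₂ : u₂ ∈ K)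
    (hu₂w : ∃ w : F, w ≠ 0 ∧ w ^ (p ^ s - 1) = u₂)
    (hμd : μ ^ p ^ s = u₁ + u₂ * μ) (ha : a ∈ K) (hβ : β ∈ K) (hγ : γ ∈ K) (ha₁ : a₁ ∈ K)
    (ha₂ : a₂ ∈ K) (ht₁ : t₁ ∈ K) (ht₂ : t₂ ∈ K)
    (E₁ : (a + β * μ) ^ p ^ s * (a₁ + γ * μ) + (a + β * μ) * (a₁ + γ * μ) ^ p ^ s =
      T + (t₁ + (a₁ ^ p ^ s * γ + a₁ * γ ^ p ^ s * u₂ + c) * μ))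
    (E₂ : (a + β * μ) ^ p ^ s * (a₂ + γ * μ) + (a + β * μ) * (a₂ + γ * μ) ^ p ^ s =
      T + (t₂ + (a₂ ^ p ^ s * γ + a₂ * γ ^ p ^ s * u₂ + c) * μ))
    (hcase : γ ≠ β ∨ a₁ = a₂) : a₁ = a₂ ∧ t₁ = t₂ := by
  obtain rfl : a₁ = a₂ := by
    refine hcase.elim (fun hγβ ↦ ?_) id
    obtain ⟨w, hw, rfl⟩ := hu₂w
    exact sub_eq_zero.mp <| eq_zero_of_pow_mul_add_mul_pow_eq_zero hp.pow hr hcard hw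
      (sub_ne_zero.mpr hγβ.symm)
      (sub_relation_of_neighbour_eqs hμ hu₁ hu₂ hμd ha hβ hγ ha₁ ha₂ ht₁ ht₂ E₁ E₂)
  exact ⟨rfl, by linear_combination E₂ - E₁⟩

end Neighbours

theorem stmt_16_general {p s n r : ℕ} (hp : p.Prime) (hpodd : Odd p) (hn : 0 < n)
    (hr : s * r = 2 * n) (hrodd : Odd r)
    {F : Type*} [Field F] [Fintype F] (q d : ℕ) (hq : q = p ^ n) (hd : d = p ^ s)
    (hF : Fintype.card F = q ^ 2)
    (μ u1 u2 w2 : F) (hμ : μ ^ q ≠ μ)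
    (hu1 : u1 ^ q = u1) (hu2 : u2 ^ q = u2)
    (hμd : μ ^ d = u1 + u2 * μ)
    (hu2pow : ∃ w : F, w ≠ 0 ∧ w ^ (d - 1) = u2)
    (A : SimpleGraph (F × F))
    (hA : A = SimpleGraph.fromRel (fun u v => ∃ a b : F,
      a ^ d + a = u.1 ∧ b ^ d + b = v.1 ∧ a ^ d * b + a * b ^ d = u.2 + v.2))
    (X : Set (F × F))
    (hX : X = {v | ∃ a β t1 : F, a ^ q = a ∧ β ^ q = β ∧ t1 ^ q = t1 ∧
      v = ((a + β * μ) ^ d + (a + β * μ),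
        t1 + (a ^ d * β + a * β ^ d * u2 + β ^ (d + 1) * w2) * μ)}) :
    ∀ v ∈ X, {w ∈ X | A.Adj v w}.ncard ≤ 2 * q - 1 := by
  subst hq hd
  have : Fact p.Prime := ⟨hp⟩
  have hcard : Fintype.card F = (p ^ s) ^ r := by rw [hF, ← pow_mul, ← pow_mul, hr, mul_comm]
  have : CharP F p := charP_of_card_eq_prime_pow (hcard.trans (pow_mul p s r).symm)
  have hinj := pow_add_self_injective hpodd hrodd hcard
  let K := frobeniusFixedField (F := F) p n
  let point : F × F × F → F × F := fun x ↦ ((x.1 + x.2.1 * μ) ^ p ^ s + (x.1 + x.2.1 * μ),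
    x.2.2 + (x.1 ^ p ^ s * x.2.1 + x.1 * x.2.1 ^ p ^ s * u2 + x.2.1 ^ (p ^ s + 1) * w2) * μ)
  intro v hv
  rw [hX] at hv
  obtain ⟨a, β, t, ha, hβ, ht, rfl⟩ := hv
  let S := {x ∈ (K : Set F) ×ˢ (K : Set F) ×ˢ (K : Set F) | A.Adj (point (a, β, t)) (point x)}
  have hN : {w ∈ X | A.Adj (point (a, β, t)) w} ⊆ point '' S := by
    rintro _ ⟨hw, hadj⟩
    rw [hX] at hw
    obtain ⟨a₁, γ, t₁, ha₁, hγ, ht₁, rfl⟩ := hw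
    exact ⟨(a₁, γ, t₁), ⟨⟨ha₁, hγ, ht₁⟩, hadj⟩, rfl⟩
  have hS : S.ncard ≤ 2 * p ^ n - 1 := by
    refine ncard_le_two_mul_sub_one (ncard_frobeniusFixedField_le hp.one_lt hn.ne') hβ
      (f := fun x ↦ x.2.1) (g := Prod.fst) (fun x hx ↦ hx.1.2.1) (fun x hx ↦ hx.1.1) ?_
    rintro ⟨a₁, γ, t₁⟩ ⟨⟨ha₁, hγ, ht₁⟩, hadj₁⟩ ⟨a₂, γ', t₂⟩ ⟨⟨ha₂, -, ht₂⟩, hadj₂⟩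
      (rfl : γ = γ') hcase
    rw [hA] at hadj₁ hadj₂
    obtain ⟨rfl, rfl⟩ := eq_and_eq_of_neighbour_eqs (K := K) hpodd hrodd hcard hμ hu1 hu2 hu2pow
      hμd ha hβ hγ ha₁ ha₂ ht₁ ht₂ (pow_mul_add_mul_pow_eq_of_adj hinj hadj₁)
      (pow_mul_add_mul_pow_eq_of_adj hinj hadj₂) hcase
    rfl
  calc _ ≤ (point '' S).ncard := Set.ncard_le_ncard hN
    _ ≤ S.ncard := Set.ncard_image_le S.toFinite
    _ ≤ 2 * p ^ n - 1 := hS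

/-- With `μ ∈ F_{q^2} \ F_q`, `μ^d = u1 + u2 μ`, `μ^{d+1} = w1 + w2 μ`
(`u1, u2, w1, w2 ∈ F_q`, `u2` a `(d-1)`-th power in `F_{q^2}^*`), every vertex of the set
`X = {((a + βμ)^d + (a + βμ), t1 + (a^d β + a β^d u2 + β^{d+1} w2)μ) : a, β, t1 ∈ F_q}`
has at most `2q - 1` neighbors within `X` in the graph `A_{q^2,d}`. -/
theorem stmt_16 {p s n r : ℕ} (hp : p.Prime) (hpodd : Odd p) (hs : 0 < s) (hn : 0 < n)
    (hr : s * r = 2 * n) (hrodd : Odd r) (hr3 : 3 ≤ r)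
    {F : Type*} [Field F] [Fintype F] (q d : ℕ) (hq : q = p ^ n) (hd : d = p ^ s)
    (hF : Fintype.card F = q ^ 2)
    (μ u1 u2 w1 w2 : F) (hμ : μ ^ q ≠ μ)
    (hu1 : u1 ^ q = u1) (hu2 : u2 ^ q = u2) (hw1 : w1 ^ q = w1) (hw2 : w2 ^ q = w2)
    (hμd : μ ^ d = u1 + u2 * μ) (hμd1 : μ ^ (d + 1) = w1 + w2 * μ)
    (hu2pow : ∃ w : F, w ≠ 0 ∧ w ^ (d - 1) = u2)
    (A : SimpleGraph (F × F))
    (hA : A = SimpleGraph.fromRel (fun u v => ∃ a b : F,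
      a ^ d + a = u.1 ∧ b ^ d + b = v.1 ∧ a ^ d * b + a * b ^ d = u.2 + v.2))
    (X : Set (F × F))
    (hX : X = {v | ∃ a β t1 : F, a ^ q = a ∧ β ^ q = β ∧ t1 ^ q = t1 ∧
      v = ((a + β * μ) ^ d + (a + β * μ),
        t1 + (a ^ d * β + a * β ^ d * u2 + β ^ (d + 1) * w2) * μ)}) :
    ∀ v ∈ X, {w ∈ X | A.Adj v w}.ncard ≤ 2 * q - 1 :=
  stmt_16_general hp hpodd hn hr hrodd q d hq hd hF μ u1 u2 w2 hμ hu1 hu2 hμd hu2pow A hA X hX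
end

section
/- Let q be an odd prime power and let G be an orthogonal polarity graph of a projective plane of order q (so G has q^2 + q + 1 vertices, the polarity has exactly q+1 absolute points, and the adjacency matrix of the graph with loops added at absolute points has eigenvalues q+1 with multiplicity 1 and ±√q otherwise). Then the independence number of G satisfies α(G) ≤ q^{3/2} + q^{1/2} + 1. -/
/-!
Hoffman's ratio argument. Put loops at the absolute points, so that `M` is symmetric with the
all-ones vector `1` as an eigenvector for `q + 1` and every eigenvalue at least `-√q`. Then
`M + √q` is positive semidefinite, and splitting a vector `x` into its component along `1` and
the part orthogonal to `1` gives
`x ⬝ M x ≥ -√q ‖x‖² + (q + 1 + √q) (1 ⬝ x)² / (q² + q + 1)`.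
For the indicator `x` of an independent set `I` the left side counts the loops inside `I`,
at most `q + 1`, while `‖x‖² = 1 ⬝ x = |I|`; the resulting quadratic inequality in `|I|`
forces `|I| ≤ q √q + √q + 1`.
-/

open Finset Matrix

namespace Matrix

variable {n : Type*} [Fintype n]

theorem PosSemidef.mul_sq_dotProduct_div_le {B : Matrix n n ℝ} (hB : B.PosSemidef) {c : ℝ}
    {u : n → ℝ} (hu : B *ᵥ u = c • u) (x : n → ℝ) :
    c * (u ⬝ᵥ x) ^ 2 / (u ⬝ᵥ u) ≤ x ⬝ᵥ B *ᵥ x := by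
  set α := (u ⬝ᵥ x) / (u ⬝ᵥ u)
  set y := x - α • u
  -- `y` is the part of `x` orthogonal to `u`; symmetry of `B` makes the cross terms vanish
  have huy : u ⬝ᵥ y = 0 := by
    rcases eq_or_ne u 0 with rfl | hu0
    · simp
    · have : u ⬝ᵥ u ≠ 0 := fun h => hu0 (dotProduct_self_eq_zero.mp h)
      simp only [y, α, dotProduct_sub, dotProduct_smul, smul_eq_mul]
      field_simp
      ring
  have hcross : u ⬝ᵥ B *ᵥ y = 0 := by
    rw [dotProduct_mulVec, ← mulVec_transpose, (isHermitian_iff_isSymm.mp hB.isHermitian).eq, hu,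
      smul_dotProduct, huy, smul_zero]
  have hexpand : x ⬝ᵥ B *ᵥ x = α ^ 2 * c * (u ⬝ᵥ u) + y ⬝ᵥ B *ᵥ y := by
    rw [show x = α • u + y by simp [y]]
    simp only [mulVec_add, mulVec_smul, add_dotProduct, dotProduct_add, smul_dotProduct,
      dotProduct_smul, hcross, hu, dotProduct_comm y u, huy, smul_eq_mul]
    ring
  have hα : α ^ 2 * c * (u ⬝ᵥ u) = c * (u ⬝ᵥ x) ^ 2 / (u ⬝ᵥ u) := by
    rcases eq_or_ne (u ⬝ᵥ u) 0 with h | h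
    · simp [α, h]
    · simp only [α]
      field_simp
  rw [hexpand, hα]
  simpa using hB.dotProduct_mulVec_nonneg y

theorem IsHermitian.posSemidef_sub_smul_one [DecidableEq n] {A : Matrix n n ℝ}
    (hA : A.IsHermitian) {m : ℝ}
    (hm : ∀ μ, Module.End.HasEigenvalue A.mulVecLin μ → m ≤ μ) : (A - m • 1).PosSemidef := by
  have hB : (A - m • 1).IsHermitian := hA.sub (isHermitian_one.smul rfl)
  rw [hB.posSemidef_iff_eigenvalues_nonneg]
  intro j
  set v : n → ℝ := ⇑(hB.eigenvectorBasis j)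
  have hv : v ≠ 0 := fun h =>
    hB.eigenvectorBasis.orthonormal.ne_zero j (by ext i; exact congrFun h i)
  have hAv : A *ᵥ v = (hB.eigenvalues j + m) • v := by
    have := hB.mulVec_eigenvectorBasis j
    rw [sub_mulVec, smul_mulVec, one_mulVec, sub_eq_iff_eq_add] at this
    rw [this, add_smul]
  simpa using hm _ (Module.End.hasEigenvalue_of_hasEigenvector
    ⟨Module.End.mem_eigenspace_iff.2 hAv, hv⟩)

theorem IsHermitian.le_dotProduct_mulVec_of_le_eigenvalues [DecidableEq n] {A : Matrix n n ℝ}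
    (hA : A.IsHermitian) {m r : ℝ} (hm : ∀ μ, Module.End.HasEigenvalue A.mulVecLin μ → m ≤ μ)
    {u : n → ℝ} (hu : A *ᵥ u = r • u) (x : n → ℝ) :
    m * (x ⬝ᵥ x) + (r - m) * (u ⬝ᵥ x) ^ 2 / (u ⬝ᵥ u) ≤ x ⬝ᵥ A *ᵥ x := by
  have hBu : (A - m • 1) *ᵥ u = (r - m) • u := by
    rw [sub_mulVec, smul_mulVec, one_mulVec, hu, sub_smul]
  have := (hA.posSemidef_sub_smul_one hm).mul_sq_dotProduct_div_le hBu x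
  rw [sub_mulVec, smul_mulVec, one_mulVec, dotProduct_sub, dotProduct_smul, smul_eq_mul] at this
  linarith

end Matrix

theorem SimpleGraph.dotProduct_mulVec_adjMatrix_indicator {V α : Type*} [Fintype V]
    [DecidableEq V] [NonAssocSemiring α] (G : SimpleGraph V) [DecidableRel G.Adj] {I : Finset V}
    (hI : ∀ u ∈ I, ∀ v ∈ I, ¬ G.Adj u v) :
    (fun v => if v ∈ I then (1 : α) else 0) ⬝ᵥ G.adjMatrix α *ᵥ (fun v => if v ∈ I then 1 else 0)
      = 0 := by
  rw [dotProduct_mulVec_adjMatrix]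
  refine Finset.sum_eq_zero fun u _ => Finset.sum_eq_zero fun v _ => ?_
  by_cases hu : u ∈ I
  · by_cases hv : v ∈ I
    · simp [hI u hu v hv]
    · simp [hv]
  · simp [hu]

theorem le_mul_add_add_one_of_hoffman_ineq {q t s : ℝ} (ht : 0 ≤ t) (hq : t ^ 2 = q)
    (h : -t * s + (q + 1 - -t) * s ^ 2 / (q ^ 2 + q + 1) ≤ q + 1) :
    s ≤ q * t + t + 1 := by
  subst hq
  have hpos : 0 < t ^ 2 - t + 1 := by nlinarith [sq_nonneg (t - 1 / 2)]
  have hN : (t ^ 2) ^ 2 + t ^ 2 + 1 = (t ^ 2 + t + 1) * (t ^ 2 - t + 1) := by ring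
  rw [hN, sub_neg_eq_add, add_right_comm, mul_div_mul_left _ _ (by positivity)] at h
  have hquad : s ^ 2 ≤ (t ^ 2 + 1 + t * s) * (t ^ 2 - t + 1) := by
    rw [← div_le_iff₀ hpos]; linarith
  -- the quadratic `s² - t(t² - t + 1)s - (t² + 1)(t² - t + 1)` is nonnegative at
  -- `s = t³ + t + 1`, which lies to the right of its vertex
  by_contra! hs
  have hs0 : 0 ≤ t ^ 2 * t + t + 1 := by positivity
  nlinarith [mul_pos (sub_pos.2 hs) (by nlinarith : 0 < s + t ^ 2 + 1),
    mul_nonneg ht (mul_nonneg (by positivity : 0 ≤ t ^ 2 + 1) (by nlinarith : 0 ≤ t ^ 2 - t + 2))]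

theorem stmt_17_general
    (q : ℕ)
    {V : Type*} [Fintype V] [DecidableEq V]
    (G : SimpleGraph V) [DecidableRel G.Adj]
    (hV : Fintype.card V = q ^ 2 + q + 1)
    (L : Finset V) (hL : L.card = q + 1)
    (hreg : ∀ v : V, G.degree v + (if v ∈ L then 1 else 0) = q + 1)
    (M : Matrix V V ℝ)
    (hM : M = G.adjMatrix ℝ + Matrix.diagonal (fun v => if v ∈ L then 1 else 0))
    (heig : ∀ μ : ℝ, Module.End.HasEigenvalue M.mulVecLin μ →
      μ = q + 1 ∨ μ = Real.sqrt q ∨ μ = -Real.sqrt q) :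
    ∀ I : Finset V, (∀ u ∈ I, ∀ v ∈ I, ¬ G.Adj u v) →
      (I.card : ℝ) ≤ (q : ℝ) * Real.sqrt q + Real.sqrt q + 1 := by
  intro I hI
  set x : V → ℝ := fun v => if v ∈ I then 1 else 0
  have hMherm : M.IsHermitian :=
    hM ▸ (isHermitian_iff_isSymm.2 G.isSymm_adjMatrix).add (isHermitian_diagonal _)
  have hM1 : M *ᵥ 1 = ((q : ℝ) + 1) • 1 := by
    ext v
    simpa [hM, add_mulVec, ← Function.const_one, mulVec_diagonal] using
      (congrArg (Nat.cast (R := ℝ)) (hreg v))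
  have hxMx : x ⬝ᵥ M *ᵥ x ≤ q + 1 := by
    rw [hM, add_mulVec, dotProduct_add, G.dotProduct_mulVec_adjMatrix_indicator hI, zero_add]
    simp only [x, dotProduct, mulVec_diagonal, mul_ite, mul_one, mul_zero, sum_ite_mem,
      univ_inter, sum_const, nsmul_one]
    exact_mod_cast (card_le_card (inter_subset_left.trans inter_subset_right)).trans hL.le
  have hbound := hMherm.le_dotProduct_mulVec_of_le_eigenvalues (m := -Real.sqrt q)
    (fun μ hμ => by rcases heig μ hμ with rfl | rfl | rfl <;> linarith [Real.sqrt_nonneg q]) hM1 x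
  have hxx : x ⬝ᵥ x = #I := by simp [x, dotProduct]
  have h1x : 1 ⬝ᵥ x = #I := by simp [x, one_dotProduct]
  rw [hxx, h1x, one_dotProduct_one, hV] at hbound
  push_cast at hbound
  exact le_mul_add_add_one_of_hoffman_ineq (Real.sqrt_nonneg _) (Real.sq_sqrt q.cast_nonneg)
    (hbound.trans hxMx)

/-- Let `G` be an orthogonal polarity graph of a projective plane of order
`q`: `G` has `q^2 + q + 1` vertices, there is a set `L` of `q + 1` absolute points, the
graph with loops added at `L` is `(q+1)`-regular, and the matrix `M` of `G` with loops at
`L` has all eigenvalues in `{q+1, √q, -√q}` with `q+1` of multiplicity one. Then every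
independent set of `G` has size at most `q^{3/2} + q^{1/2} + 1`. -/
theorem stmt_17 {p k : ℕ} (hp : p.Prime) (hpodd : Odd p) (hk : 0 < k)
    (q : ℕ) (hq : q = p ^ k)
    {V : Type*} [Fintype V] [DecidableEq V]
    (G : SimpleGraph V) [DecidableRel G.Adj]
    (hV : Fintype.card V = q ^ 2 + q + 1)
    (L : Finset V) (hL : L.card = q + 1)
    (hreg : ∀ v : V, G.degree v + (if v ∈ L then 1 else 0) = q + 1)
    (M : Matrix V V ℝ)
    (hM : M = G.adjMatrix ℝ + Matrix.diagonal (fun v => if v ∈ L then 1 else 0))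
    (heig : ∀ μ : ℝ, Module.End.HasEigenvalue M.mulVecLin μ →
      μ = q + 1 ∨ μ = Real.sqrt q ∨ μ = -Real.sqrt q)
    (htop : Module.End.HasEigenvalue M.mulVecLin ((q : ℝ) + 1))
    (hmult : Module.finrank ℝ (Module.End.eigenspace M.mulVecLin ((q : ℝ) + 1)) = 1) :
    ∀ I : Finset V, (∀ u ∈ I, ∀ v ∈ I, ¬ G.Adj u v) →
      (I.card : ℝ) ≤ (q : ℝ) * Real.sqrt q + Real.sqrt q + 1 :=
  stmt_17_general q G hV L hL hreg M hM heig
end
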